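/- arXiv:2505.05385 — 6 statements merged into one kernel-verified Lean document; each statement's English description precedes it below -/
import Mathlib

section
/- Let (G_1,…,G_n) be graphs on a vertex set V, let A ⊆ V × [n] be a color-set, and let m, D > 0 be integers. Let F be an oriented forest whose edges are colored with colors from [n], with at most mD vertices and maximum degree at most D, having a leaf w and an edge v → w of color ℓ, and let K = F − w. Suppose (G_1,…,G_n) is a (2m, 2D+1, A)-color expander, and let φ be an (m, D, A)-good embedding of K into (G_1,…,G_n) with (φ(v), ℓ) ∈ A. Then φ can be extended to an (m, D, A)-good embedding of F (i.e., there is an (m,D,A)-good embedding ψ of F with ψ restricted to V(K) equal to φ). -/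
open Finset

variable {β V : Type*}

/-- The neighbourhood `N(S) = ⋃_{(u,i) ∈ S} N_{G_i}(u)` of a color-set `S`. -/
def colorNbhd {n : ℕ} (G : Fin n → SimpleGraph V) (S : Finset (V × Fin n)) : Set V :=
  {w | ∃ q ∈ S, (G q.2).Adj q.1 w}

/-- `(G_1, …, G_n)` is an `(m, D, A)`-color expander: every color-set `S ⊆ A` with
`|S| ≤ m` satisfies `|N(S)| ≥ D|S|`. -/
def IsColorExpander {n : ℕ} (G : Fin n → SimpleGraph V) (m D : ℕ)
    (A : Set (V × Fin n)) : Prop :=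
  ∀ S : Finset (V × Fin n), ↑S ⊆ A → S.card ≤ m → D * S.card ≤ (colorNbhd G S).ncard

/-- `(Vf, E)` is an oriented forest: all edges join distinct vertices of `Vf`, each
edge appears with only one orientation, and the underlying simple graph is acyclic. -/
def IsOrientedForest [DecidableEq β] (Vf : Finset β) (E : Finset (β × β)) : Prop :=
  (∀ e ∈ E, e.1 ∈ Vf ∧ e.2 ∈ Vf ∧ e.1 ≠ e.2) ∧
  (∀ a b : β, (a, b) ∈ E → (b, a) ∉ E) ∧
  (SimpleGraph.fromRel fun a b => (a, b) ∈ E ∨ (b, a) ∈ E).IsAcyclic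

/-- The degree of `x` in the (oriented) edge set `E`: the number of edges incident
to `x` in either orientation. -/
def degAt [DecidableEq β] (E : Finset (β × β)) (x : β) : ℕ :=
  (E.filter fun e => e.1 = x ∨ e.2 = x).card

/-- `u` has an incoming edge of color `i` in the colored edge set `(E, c)`. -/
def HasInEdge {n : ℕ} (E : Finset (β × β)) (c : β × β → Fin n) (i : Fin n) (u : β) : Prop :=
  ∃ a, (a, u) ∈ E ∧ c (a, u) = i

/-- `φ` is an embedding of the colored forest with vertices `Vf`, edges `E` and edge
colors `c` into `(G_1, …, G_n)`: it is injective on `Vf` and sends every edge of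
color `i` to an edge of `G_i`. -/
def IsColEmbedding {n : ℕ} (G : Fin n → SimpleGraph V) (Vf : Finset β)
    (E : Finset (β × β)) (c : β × β → Fin n) (φ : β → V) : Prop :=
  Set.InjOn φ ↑Vf ∧ ∀ e ∈ E, (G (c e)).Adj (φ e.1) (φ e.2)

/-- The number of edges of color `i` incident to `φ⁻¹(x)` in the colored edge set
`(E, c)` (as seen through the embedding `φ`). -/
def colDegAt {n : ℕ} [DecidableEq β] [DecidableEq V] (E : Finset (β × β))
    (c : β × β → Fin n) (φ : β → V) (x : V) (i : Fin n) : ℕ :=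
  (E.filter fun e => c e = i ∧ (φ e.1 = x ∨ φ e.2 = x)).card

/-- `φ` is an `(m, D, A)`-good embedding of the colored forest `(Vf, E, c)` into
`(G_1, …, G_n)`: it is an embedding, and for every color-set `S ⊆ A` with `|S| ≤ m`,
`|N(S) ∖ φ(Vf)| ≥ |S ∩ {(φ u, i) : u ∈ Vf has an in-edge of color i}|
  + Σ_{(x,i) ∈ S} (D − d_i(x))`. -/
def IsGoodEmbedding {n : ℕ} [DecidableEq β] [DecidableEq V]
    (G : Fin n → SimpleGraph V) (m D : ℕ) (A : Set (V × Fin n))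
    (Vf : Finset β) (E : Finset (β × β)) (c : β × β → Fin n) (φ : β → V) : Prop :=
  IsColEmbedding G Vf E c φ ∧
  ∀ S : Finset (V × Fin n), ↑S ⊆ A → S.card ≤ m →
    (((S : Set (V × Fin n)) ∩
        {q | ∃ u ∈ Vf, φ u = q.1 ∧ HasInEdge E c q.2 u}).ncard : ℤ)
      + ∑ q ∈ S, ((D : ℤ) - colDegAt E c φ q.1 q.2)
      ≤ ((colorNbhd G S \ (φ '' ↑Vf)).ncard : ℤ)

/-! Write `σ(S)` for the slack in the goodness inequality of `φ` at a color-set `S`. Since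
`|φ(V(K))| < mD`, the `(2m, 2D+1, A)`-expansion makes `σ` positive on color-sets of size in
`(m, 2m]`; as `σ` is submodular, the color-sets `S ⊆ A ∖ {(φ v, ℓ)}` with `|S| ≤ m` and
`σ(S) = 0` are closed under union, so there is a largest one, `T`. Because `d_ℓ(φ v) < D` in `K`,
adding `(φ v, ℓ)` to `T` enlarges `N(T) ∖ φ(V(K))` by some vertex `y`, a neighbour of `φ v` in
`G_ℓ`. Sending `w` to `y` lowers the slack by one only at color-sets `S` with `y ∈ N(S)` and
`(φ v, ℓ) ∉ S`, and those have positive slack, since otherwise `S ⊆ T` and `y ∈ N(T)`. -/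

lemma ncard_union_inter_add_ncard_inter_inter {α : Type*} [DecidableEq α] (S T : Finset α)
    (I : Set α) :
    (↑(S ∪ T) ∩ I).ncard + (↑(S ∩ T) ∩ I).ncard = (↑S ∩ I).ncard + (↑T ∩ I).ncard := by
  rw [coe_union, coe_inter, Set.union_inter_distrib_right, Set.inter_inter_distrib_right,
    Set.ncard_union_add_ncard_inter _ _ (S.finite_toSet.inter_of_left I)
      (T.finite_toSet.inter_of_left I)]

lemma ncard_coe_inter_insert_le {α : Type*} [DecidableEq α] (S : Finset α) (p : α) (I : Set α) :
    (↑S ∩ insert p I).ncard ≤ (↑S ∩ I).ncard + if p ∈ S then 1 else 0 := by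
  split_ifs with hp
  · rw [Set.inter_insert_of_mem (mem_coe.2 hp)]
    exact Set.ncard_insert_le _ _
  · rw [Set.inter_insert_of_notMem (mem_coe.not.2 hp), add_zero]

lemma ncard_sdiff_insert_add_ite {α : Type*} {N X : Set α} (hN : N.Finite) (y : α)
    [Decidable (y ∈ N \ X)] :
    (N \ insert y X).ncard + (if y ∈ N \ X then 1 else 0) = (N \ X).ncard := by
  have hdiff : N \ insert y X = (N \ X) \ {y} := by
    ext z
    simp only [Set.mem_sdiff, Set.mem_insert_iff, Set.mem_singleton_iff]
    tauto
  split_ifs with hy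
  · rw [hdiff, Set.ncard_sdiff_singleton_add_one hy hN.sdiff]
  · rw [hdiff, Set.sdiff_singleton_eq_self hy, add_zero]

lemma exists_greatest_of_union_closed {α : Type*} [Fintype α] [DecidableEq α]
    (P : Finset α → Prop) (h0 : P ∅) (hunion : ∀ S T, P S → P T → P (S ∪ T)) :
    ∃ T, P T ∧ ∀ S, P S → S ⊆ T := by
  classical
  exact ⟨(univ.filter P).sup id,
      sup_induction h0 (fun S hS T hT => hunion S T hS hT) fun _ hS => (mem_filter.1 hS).2,
      fun _ hS => le_sup (f := id) (mem_filter.2 ⟨mem_univ _, hS⟩)⟩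

lemma exists_greatest_zero_of_submodular {α : Type*} [Fintype α] [DecidableEq α]
    (f : Finset α → ℤ) (B : Set α) (m : ℕ) (h0 : f ∅ = 0)
    (hsub : ∀ S T, f (S ∪ T) + f (S ∩ T) ≤ f S + f T)
    (hnonneg : ∀ S : Finset α, ↑S ⊆ B → S.card ≤ 2 * m → 0 ≤ f S)
    (hpos : ∀ S : Finset α, ↑S ⊆ B → m < S.card → S.card ≤ 2 * m → 0 < f S) :
    ∃ T : Finset α, (↑T ⊆ B ∧ T.card ≤ m ∧ f T = 0) ∧
      ∀ S : Finset α, ↑S ⊆ B → S.card ≤ m → f S = 0 → S ⊆ T := by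
  obtain ⟨T, hT, hTmax⟩ := exists_greatest_of_union_closed
    (fun S => ↑S ⊆ B ∧ S.card ≤ m ∧ f S = 0) (by simp [h0]) (by
      rintro S T ⟨hSB, hSm, hS0⟩ ⟨hTB, hTm, hT0⟩
      have hUB : ↑(S ∪ T) ⊆ B := by rw [coe_union]; exact Set.union_subset hSB hTB
      have hU2m : (S ∪ T).card ≤ 2 * m := (card_union_le S T).trans (by omega)
      have hIB : ↑(S ∩ T) ⊆ B := (coe_subset.2 inter_subset_left).trans hSB
      have hI2m : (S ∩ T).card ≤ 2 * m := (card_le_card inter_subset_left).trans (by omega)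
      have hU0 : f (S ∪ T) = 0 := by
        linarith [hsub S T, hnonneg _ hUB hU2m, hnonneg _ hIB hI2m]
      refine ⟨hUB, ?_, hU0⟩
      by_contra! hUm
      exact (hpos _ hUB hUm hU2m).ne' hU0)
  exact ⟨T, hT, fun S hSB hSm hS0 => hTmax S ⟨hSB, hSm, hS0⟩⟩

section ColorNbhd

variable {n : ℕ} (G : Fin n → SimpleGraph V)

lemma colorNbhd_mono {S T : Finset (V × Fin n)} (h : S ⊆ T) : colorNbhd G S ⊆ colorNbhd G T :=
  fun _ ⟨q, hq, hadj⟩ => ⟨q, h hq, hadj⟩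

@[simp]
lemma colorNbhd_empty : colorNbhd G ∅ = ∅ := by
  simp [colorNbhd]

variable [DecidableEq V]

lemma colorNbhd_union (S T : Finset (V × Fin n)) :
    colorNbhd G (S ∪ T) = colorNbhd G S ∪ colorNbhd G T := by
  ext x
  simp only [colorNbhd, Set.mem_ofPred_eq, mem_union, Set.mem_union, or_and_right, exists_or]

lemma colorNbhd_insert (p : V × Fin n) (S : Finset (V × Fin n)) :
    colorNbhd G (insert p S) = {y | (G p.2).Adj p.1 y} ∪ colorNbhd G S := by
  ext x
  simp only [colorNbhd, Set.mem_ofPred_eq, mem_insert, Set.mem_union, or_and_right, exists_or,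
    exists_eq_left]

lemma ncard_colorNbhd_sdiff_union_add_inter_le [Fintype V] (X : Set V)
    (S T : Finset (V × Fin n)) :
    (colorNbhd G (S ∪ T) \ X).ncard + (colorNbhd G (S ∩ T) \ X).ncard ≤
      (colorNbhd G S \ X).ncard + (colorNbhd G T \ X).ncard := by
  have hinter : colorNbhd G (S ∩ T) \ X ⊆ (colorNbhd G S \ X) ∩ (colorNbhd G T \ X) :=
    fun x hx => ⟨⟨colorNbhd_mono G inter_subset_left hx.1, hx.2⟩,
      ⟨colorNbhd_mono G inter_subset_right hx.1, hx.2⟩⟩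
  rw [← Set.ncard_union_add_ncard_inter (colorNbhd G S \ X), colorNbhd_union,
    Set.union_sdiff_distrib]
  exact Nat.add_le_add_left (Set.ncard_le_ncard hinter) _

end ColorNbhd

section Forest

variable [DecidableEq β] {E : Finset (β × β)}

lemma eq_of_mem_of_degAt_eq_one {v w : β} (hw : degAt E w = 1) (hvw : (v, w) ∈ E)
    {e : β × β} (he : e ∈ E) (hew : e.1 = w ∨ e.2 = w) : e = (v, w) :=
  card_le_one.1 hw.le e (mem_filter.2 ⟨he, hew⟩) (v, w) (mem_filter.2 ⟨hvw, Or.inr rfl⟩)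

lemma degAt_erase_add_one {e : β × β} {x : β} (he : e ∈ E) (hx : e.1 = x ∨ e.2 = x) :
    degAt (E.erase e) x + 1 = degAt E x := by
  rw [degAt, degAt, filter_erase, card_erase_add_one (mem_filter.2 ⟨he, hx⟩)]

lemma colDegAt_le_degAt [DecidableEq V] {n : ℕ} (c : β × β → Fin n) {Vf : Finset β} {φ : β → V}
    (hinj : Set.InjOn φ ↑Vf) (hE : ∀ e ∈ E, e.1 ∈ Vf ∧ e.2 ∈ Vf) {v : β} (hv : v ∈ Vf)
    (i : Fin n) : colDegAt E c φ (φ v) i ≤ degAt E v := by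
  refine card_le_card fun e he => ?_
  obtain ⟨heE, -, hφe⟩ := mem_filter.1 he
  exact mem_filter.2 ⟨heE, hφe.imp (hinj (hE e heE).1 hv) (hinj (hE e heE).2 hv)⟩

end Forest

section Slack

variable {n : ℕ}

def inEdgeColorSet (Vf : Finset β) (E : Finset (β × β)) (c : β × β → Fin n) (φ : β → V) :
    Set (V × Fin n) :=
  {q | ∃ u ∈ Vf, φ u = q.1 ∧ HasInEdge E c q.2 u}

variable [DecidableEq β] [DecidableEq V] (G : Fin n → SimpleGraph V) (D : ℕ)

noncomputable def embeddingSlack (Vf : Finset β) (E : Finset (β × β)) (c : β × β → Fin n)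
    (φ : β → V) (S : Finset (V × Fin n)) : ℤ :=
  (colorNbhd G S \ φ '' Vf).ncard - ((S : Set (V × Fin n)) ∩ inEdgeColorSet Vf E c φ).ncard
    - ∑ q ∈ S, ((D : ℤ) - colDegAt E c φ q.1 q.2)

variable {G D} {Vf : Finset β} {E : Finset (β × β)} {c : β × β → Fin n} {φ : β → V}

lemma isGoodEmbedding_iff_embeddingSlack_nonneg {m : ℕ} {A : Set (V × Fin n)} :
    IsGoodEmbedding G m D A Vf E c φ ↔ IsColEmbedding G Vf E c φ ∧
      ∀ S : Finset (V × Fin n), ↑S ⊆ A → S.card ≤ m → 0 ≤ embeddingSlack G D Vf E c φ S := by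
  simp only [IsGoodEmbedding, embeddingSlack, inEdgeColorSet, sub_sub, sub_nonneg]

@[simp]
lemma embeddingSlack_empty : embeddingSlack G D Vf E c φ ∅ = 0 := by
  simp [embeddingSlack]

lemma embeddingSlack_union_add_inter_le [Fintype V] (S T : Finset (V × Fin n)) :
    embeddingSlack G D Vf E c φ (S ∪ T) + embeddingSlack G D Vf E c φ (S ∩ T) ≤
      embeddingSlack G D Vf E c φ S + embeddingSlack G D Vf E c φ T := by
  have hN := ncard_colorNbhd_sdiff_union_add_inter_le G (φ '' Vf) S T
  have hI := ncard_union_inter_add_ncard_inter_inter S T (inEdgeColorSet Vf E c φ)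
  have hsum := sum_union_inter (s₁ := S) (s₂ := T)
    (f := fun q => (D : ℤ) - colDegAt E c φ q.1 q.2)
  have hN' := (Nat.cast_le (α := ℤ)).2 hN
  have hI' := congrArg (Nat.cast : ℕ → ℤ) hI
  simp only [Nat.cast_add] at hN' hI'
  simp only [embeddingSlack]
  linarith

lemma embeddingSlack_ge_of_isColorExpander [Fintype V] {M : ℕ} {A : Set (V × Fin n)}
    (hexp : IsColorExpander G M (2 * D + 1) A) {S : Finset (V × Fin n)} (hSA : ↑S ⊆ A)
    (hSM : S.card ≤ M) :
    (D : ℤ) * S.card - Vf.card ≤ embeddingSlack G D Vf E c φ S := by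
  have hN : (2 * D + 1) * S.card ≤ (colorNbhd G S).ncard := hexp S hSA hSM
  have hdiff := Set.ncard_le_ncard_sdiff_add_ncard (colorNbhd G S) (φ '' Vf)
  have himage : (φ '' Vf).ncard ≤ Vf.card :=
    (Set.ncard_image_le Vf.finite_toSet).trans (Set.ncard_coe_finset Vf).le
  have hI : (↑S ∩ inEdgeColorSet Vf E c φ).ncard ≤ S.card :=
    (Set.ncard_inter_le_ncard_left _ _ S.finite_toSet).trans (Set.ncard_coe_finset S).le
  have hsum : ∑ q ∈ S, ((D : ℤ) - colDegAt E c φ q.1 q.2) ≤ S.card • (D : ℤ) :=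
    sum_le_card_nsmul _ _ _ fun q _ => sub_le_self _ (Nat.cast_nonneg _)
  rw [nsmul_eq_mul] at hsum
  simp only [embeddingSlack]
  zify at hN hdiff himage hI
  linarith

lemma embeddingSlack_pos_of_lt_card [Fintype V] {M m : ℕ} {A : Set (V × Fin n)}
    (hexp : IsColorExpander G M (2 * D + 1) A) (hVf : Vf.card < m * D)
    {S : Finset (V × Fin n)} (hSA : ↑S ⊆ A) (hmS : m < S.card) (hSM : S.card ≤ M) :
    0 < embeddingSlack G D Vf E c φ S := by
  have hDm : (D : ℤ) * m ≤ D * S.card := by gcongr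
  have hVf' : (Vf.card : ℤ) < m * D := by exact_mod_cast hVf
  linarith [embeddingSlack_ge_of_isColorExpander (Vf := Vf) (E := E) (c := c) (φ := φ)
    hexp hSA hSM]

lemma IsGoodEmbedding.embeddingSlack_nonneg [Fintype V] {M m : ℕ} {A : Set (V × Fin n)}
    (hgood : IsGoodEmbedding G m D A Vf E c φ) (hexp : IsColorExpander G M (2 * D + 1) A)
    (hVf : Vf.card < m * D) {S : Finset (V × Fin n)} (hSA : ↑S ⊆ A) (hSM : S.card ≤ M) :
    0 ≤ embeddingSlack G D Vf E c φ S := by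
  by_cases hSm : S.card ≤ m
  · exact (isGoodEmbedding_iff_embeddingSlack_nonneg.1 hgood).2 S hSA hSm
  · exact (embeddingSlack_pos_of_lt_card hexp hVf hSA (not_le.1 hSm) hSM).le

theorem IsGoodEmbedding.exists_free_neighbor [Fintype V] {m : ℕ} {A : Set (V × Fin n)}
    (hgood : IsGoodEmbedding G m D A Vf E c φ)
    (hexp : IsColorExpander G (2 * m) (2 * D + 1) A) (hm : 0 < m) (hVf : Vf.card < m * D)
    {x : V} {ℓ : Fin n} (hxA : (x, ℓ) ∈ A) (hdeg : colDegAt E c φ x ℓ < D) :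
    ∃ y, y ∉ φ '' Vf ∧ (G ℓ).Adj x y ∧
      ∀ S : Finset (V × Fin n), ↑S ⊆ A → S.card ≤ m → (x, ℓ) ∉ S → y ∈ colorNbhd G S →
        0 < embeddingSlack G D Vf E c φ S := by
  have hnonneg : ∀ S : Finset (V × Fin n), ↑S ⊆ A → S.card ≤ 2 * m →
      0 ≤ embeddingSlack G D Vf E c φ S :=
    fun _ hSA hSM => hgood.embeddingSlack_nonneg hexp hVf hSA hSM
  obtain ⟨T, ⟨hTB, hTm, hT0⟩, hTmax⟩ := exists_greatest_zero_of_submodular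
    (embeddingSlack G D Vf E c φ) (A \ {(x, ℓ)}) m embeddingSlack_empty
    embeddingSlack_union_add_inter_le (fun S hS => hnonneg S (hS.trans Set.sdiff_subset))
    (fun S hS => embeddingSlack_pos_of_lt_card hexp hVf (hS.trans Set.sdiff_subset))
  have hxT : (x, ℓ) ∉ T := fun h => (hTB h).2 rfl
  have hgrow : (colorNbhd G T \ φ '' Vf).ncard <
      (colorNbhd G (insert (x, ℓ) T) \ φ '' Vf).ncard := by
    have hTA : ↑(insert (x, ℓ) T) ⊆ A := by
      rw [coe_insert]
      exact Set.insert_subset hxA (hTB.trans Set.sdiff_subset)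
    have h1 := hnonneg _ hTA ((card_insert_le _ _).trans (by omega))
    have h2 : (↑T ∩ inEdgeColorSet Vf E c φ).ncard ≤
        (↑(insert (x, ℓ) T) ∩ inEdgeColorSet Vf E c φ).ncard :=
      Set.ncard_le_ncard (Set.inter_subset_inter_left _ (coe_subset.2 (subset_insert _ _)))
        ((insert (x, ℓ) T).finite_toSet.inter_of_left _)
    have hdeg' : (colDegAt E c φ x ℓ : ℤ) < D := by exact_mod_cast hdeg
    simp only [embeddingSlack, sum_insert hxT] at h1 hT0
    have h2' := (Nat.cast_le (α := ℤ)).2 h2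
    rw [← Nat.cast_lt (α := ℤ)]
    linarith
  obtain ⟨y, ⟨hyN, hyK⟩, hyT⟩ := Set.exists_mem_notMem_of_ncard_lt_ncard hgrow
  have hyT' : y ∉ colorNbhd G T := fun h => hyT ⟨h, hyK⟩
  rw [colorNbhd_insert] at hyN
  refine ⟨y, hyK, hyN.resolve_right hyT', fun S hSA hSm hxS hyS => ?_⟩
  refine (hnonneg S hSA (by omega)).lt_of_ne fun hS0 => hyT' ?_
  exact colorNbhd_mono G (hTmax S (Set.subset_sdiff_singleton hSA hxS) hSm hS0.symm) hyS

end Slack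

section Leaf

variable {n : ℕ} [DecidableEq β] {VK : Finset β} {EK : Finset (β × β)} {v w : β} {φ : β → V}
  {y : V}

lemma image_update_insert (hw : w ∉ VK) :
    Function.update φ w y '' ↑(insert w VK) = insert y (φ '' ↑VK) := by
  rw [coe_insert, Set.image_insert_eq, Function.update_self]
  congr 1
  exact Set.image_congr fun u hu =>
    Function.update_of_ne (ne_of_mem_of_not_mem hu (mem_coe.not.2 hw)) _ _

lemma IsColEmbedding.insert_leaf {G : Fin n → SimpleGraph V} {c : β × β → Fin n}
    (hemb : IsColEmbedding G VK EK c φ) (hw : w ∉ VK) (hvw : v ≠ w)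
    (hEK : ∀ e ∈ EK, e.1 ≠ w ∧ e.2 ≠ w) (hy : y ∉ φ '' ↑VK)
    (hadj : (G (c (v, w))).Adj (φ v) y) :
    IsColEmbedding G (insert w VK) (insert (v, w) EK) c (Function.update φ w y) := by
  have hφ : Set.EqOn (Function.update φ w y) φ ↑VK :=
    fun u hu => Function.update_of_ne (ne_of_mem_of_not_mem hu (mem_coe.not.2 hw)) _ _
  refine ⟨?_, ?_⟩
  · rw [coe_insert, Set.injOn_insert (mem_coe.not.2 hw), hφ.image_eq, Function.update_self]
    exact ⟨hemb.1.congr hφ.symm, hy⟩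
  · rw [forall_mem_insert]
    refine ⟨by simpa [Function.update_of_ne hvw] using hadj, fun e he => ?_⟩
    rw [Function.update_of_ne (hEK e he).1, Function.update_of_ne (hEK e he).2]
    exact hemb.2 e he

lemma colDegAt_insert_leaf [DecidableEq V] (c : β × β → Fin n)
    (hEK : ∀ e ∈ EK, e.1 ≠ w ∧ e.2 ≠ w) (hvw : v ≠ w) (hy : φ v ≠ y) (x : V) (i : Fin n) :
    colDegAt (insert (v, w) EK) c (Function.update φ w y) x i =
      colDegAt EK c φ x i + (if (x, i) = (φ v, c (v, w)) then 1 else 0) +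
        (if (x, i) = (y, c (v, w)) then 1 else 0) := by
  have hvwK : (v, w) ∉ EK := fun h => (hEK _ h).2 rfl
  have hEKφ : EK.filter (fun e => c e = i ∧
        (Function.update φ w y e.1 = x ∨ Function.update φ w y e.2 = x)) =
      EK.filter (fun e => c e = i ∧ (φ e.1 = x ∨ φ e.2 = x)) :=
    filter_congr fun e he => by
      rw [Function.update_of_ne (hEK e he).1, Function.update_of_ne (hEK e he).2]
  unfold colDegAt
  rw [filter_insert, hEKφ, Function.update_of_ne hvw, Function.update_self]
  split_ifs <;> simp_all [Prod.ext_iff, eq_comm]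

lemma inEdgeColorSet_insert_leaf_subset (c : β × β → Fin n) (hw : w ∉ VK)
    (hEK : ∀ e ∈ EK, e.2 ≠ w) :
    inEdgeColorSet (insert w VK) (insert (v, w) EK) c (Function.update φ w y) ⊆
      insert (y, c (v, w)) (inEdgeColorSet VK EK c φ) := by
  rintro ⟨x, i⟩ ⟨u, hu, hux, a, ha, hac⟩
  rcases mem_insert.1 hu with rfl | huK
  · obtain ⟨rfl, -⟩ := Prod.mk.inj ((mem_insert.1 ha).resolve_right fun h => hEK _ h rfl)
    left
    simp_all
  · have huw : u ≠ w := fun h => hw (h ▸ huK)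
    have haK : (a, u) ∈ EK := (mem_insert.1 ha).resolve_left fun h => huw (Prod.mk.inj h).2
    exact Or.inr ⟨u, huK, by rwa [Function.update_of_ne huw] at hux, a, haK, hac⟩

open Classical in
lemma embeddingSlack_insert_leaf_ge [Fintype V] [DecidableEq V] (G : Fin n → SimpleGraph V)
    (D : ℕ) (c : β × β → Fin n) (hw : w ∉ VK) (hv : v ∈ VK)
    (hEK : ∀ e ∈ EK, e.1 ≠ w ∧ e.2 ≠ w) (hy : y ∉ φ '' ↑VK) (S : Finset (V × Fin n)) :
    embeddingSlack G D VK EK c φ S + (if (φ v, c (v, w)) ∈ S then 1 else 0)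
        - (if y ∈ colorNbhd G S \ φ '' ↑VK then 1 else 0) ≤
      embeddingSlack G D (insert w VK) (insert (v, w) EK) c (Function.update φ w y) S := by
  have hvw : v ≠ w := fun h => hw (h ▸ hv)
  have hφy : φ v ≠ y := fun h => hy ⟨v, hv, h⟩
  have hN := ncard_sdiff_insert_add_ite (colorNbhd G S).toFinite y (X := φ '' ↑VK)
  have hI := (Set.ncard_le_ncard (Set.inter_subset_inter_right _
    (inEdgeColorSet_insert_leaf_subset (y := y) c hw fun e he => (hEK e he).2))
    (S.finite_toSet.inter_of_left _)).trans
    (ncard_coe_inter_insert_le S (y, c (v, w)) (inEdgeColorSet VK EK c φ))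
  have hsum :
      ∑ q ∈ S, ((D : ℤ) - colDegAt (insert (v, w) EK) c (Function.update φ w y) q.1 q.2) =
        ∑ q ∈ S, ((D : ℤ) - colDegAt EK c φ q.1 q.2) - (if (φ v, c (v, w)) ∈ S then 1 else 0)
          - (if (y, c (v, w)) ∈ S then 1 else 0) := by
    simp only [colDegAt_insert_leaf c hEK hvw hφy, Nat.cast_add, Nat.cast_ite, Nat.cast_one,
      Nat.cast_zero, Prod.mk.eta, sub_add_eq_sub_sub, sum_sub_distrib, sum_ite_eq']
  have hN' := congrArg (Nat.cast : ℕ → ℤ) hN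
  have hI' := (Nat.cast_le (α := ℤ)).2 hI
  push_cast at hN' hI'
  simp only [embeddingSlack, image_update_insert hw, hsum]
  linarith

theorem IsGoodEmbedding.insert_leaf [Fintype V] [DecidableEq V] {G : Fin n → SimpleGraph V}
    {m D : ℕ} {A : Set (V × Fin n)} {c : β × β → Fin n} {ℓ : Fin n}
    (hgood : IsGoodEmbedding G m D A VK EK c φ) (hw : w ∉ VK) (hv : v ∈ VK)
    (hEK : ∀ e ∈ EK, e.1 ≠ w ∧ e.2 ≠ w) (hcol : c (v, w) = ℓ) (hy : y ∉ φ '' ↑VK)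
    (hadj : (G ℓ).Adj (φ v) y)
    (hslack : ∀ S : Finset (V × Fin n), ↑S ⊆ A → S.card ≤ m → (φ v, ℓ) ∉ S →
      y ∈ colorNbhd G S → 0 < embeddingSlack G D VK EK c φ S) :
    IsGoodEmbedding G m D A (insert w VK) (insert (v, w) EK) c (Function.update φ w y) := by
  subst hcol
  rw [isGoodEmbedding_iff_embeddingSlack_nonneg] at hgood ⊢
  refine ⟨hgood.1.insert_leaf hw (fun h => hw (h ▸ hv)) hEK hy hadj, fun S hSA hSm => ?_⟩
  have hK := hgood.2 S hSA hSm
  have hF := embeddingSlack_insert_leaf_ge G D c hw hv hEK hy S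
  by_cases hvS : (φ v, c (v, w)) ∈ S
  · simp only [hvS, if_true] at hF
    split_ifs at hF <;> linarith
  · by_cases hyS : y ∈ colorNbhd G S \ φ '' ↑VK
    · simp only [hvS, hyS, if_true, if_false] at hF
      linarith [hslack S hSA hSm hvS hyS.1]
    · simp only [hvS, hyS, if_false] at hF
      linarith

end Leaf

theorem statement_5_general [DecidableEq β] [Fintype V] [DecidableEq V] {n : ℕ}
    (G : Fin n → SimpleGraph V) (A : Set (V × Fin n)) (m D : ℕ)
    (hm : 0 < m)
    (Vf : Finset β) (Ef : Finset (β × β)) (c : β × β → Fin n)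
    (hforest : IsOrientedForest Vf Ef)
    (hcard : Vf.card ≤ m * D)
    (hmaxdeg : ∀ x, degAt Ef x ≤ D)
    (w v : β) (ℓ : Fin n)
    (hleaf : degAt Ef w = 1) (hvw : (v, w) ∈ Ef) (hcol : c (v, w) = ℓ)
    (hexp : IsColorExpander G (2 * m) (2 * D + 1) A)
    (φ : β → V)
    (hgood : IsGoodEmbedding G m D A (Vf.erase w) (Ef.erase (v, w)) c φ)
    (hA : (φ v, ℓ) ∈ A) :
    ∃ ψ : β → V, (∀ u ∈ Vf.erase w, ψ u = φ u) ∧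
      IsGoodEmbedding G m D A Vf Ef c ψ := by
  obtain ⟨hvVf, hwVf, hvw_ne⟩ : v ∈ Vf ∧ w ∈ Vf ∧ v ≠ w := hforest.1 _ hvw
  have hEK : ∀ e ∈ Ef.erase (v, w), e.1 ≠ w ∧ e.2 ≠ w := fun e he =>
    have hne := fun h => (mem_erase.1 he).1 (eq_of_mem_of_degAt_eq_one hleaf hvw
      (mem_erase.1 he).2 h)
    ⟨fun h => hne (Or.inl h), fun h => hne (Or.inr h)⟩
  have hEK_sub : ∀ e ∈ Ef.erase (v, w), e.1 ∈ Vf.erase w ∧ e.2 ∈ Vf.erase w := fun e he =>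
    have he' := hforest.1 e (mem_of_mem_erase he)
    ⟨mem_erase.2 ⟨(hEK e he).1, he'.1⟩, mem_erase.2 ⟨(hEK e he).2, he'.2.1⟩⟩
  have hvK : v ∈ Vf.erase w := mem_erase.2 ⟨hvw_ne, hvVf⟩
  have hdeg : colDegAt (Ef.erase (v, w)) c φ (φ v) ℓ < D := by
    have hdeg_erase := degAt_erase_add_one (x := v) hvw (Or.inl rfl)
    have hcol_le := colDegAt_le_degAt c hgood.1.1 hEK_sub hvK ℓ
    have hdeg_v := hmaxdeg v
    omega
  have hVK : (Vf.erase w).card < m * D := by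
    have hcard_erase := card_erase_add_one hwVf
    omega
  obtain ⟨y, hyK, hadj, hslack⟩ := hgood.exists_free_neighbor hexp hm hVK hA hdeg
  refine ⟨Function.update φ w y, fun u hu => Function.update_of_ne (ne_of_mem_erase hu) _ _, ?_⟩
  simpa only [insert_erase hwVf, insert_erase hvw] using
    hgood.insert_leaf (notMem_erase w Vf) hvK hEK hcol hyK hadj hslack

/-- Extension lemma: if `(G_1,…,G_n)` is a `(2m, 2D+1, A)`-color expander, `F` is an
oriented edge-colored forest with at most `mD` vertices and maximum degree at most `D`,
`w` is a leaf of `F` with (unique) edge `v → w` of color `ℓ`, `(φ v, ℓ) ∈ A`, and `φ`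
is an `(m, D, A)`-good embedding of `K = F − w`, then `φ` extends to an `(m, D, A)`-good
embedding of `F`. -/
theorem statement_5 [DecidableEq β] [Fintype V] [DecidableEq V] {n : ℕ}
    (G : Fin n → SimpleGraph V) (A : Set (V × Fin n)) (m D : ℕ)
    (hm : 0 < m) (hD : 0 < D)
    (Vf : Finset β) (Ef : Finset (β × β)) (c : β × β → Fin n)
    (hforest : IsOrientedForest Vf Ef)
    (hcard : Vf.card ≤ m * D)
    (hmaxdeg : ∀ x, degAt Ef x ≤ D)
    (w v : β) (ℓ : Fin n)
    (hleaf : degAt Ef w = 1) (hvw : (v, w) ∈ Ef) (hcol : c (v, w) = ℓ)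
    (hexp : IsColorExpander G (2 * m) (2 * D + 1) A)
    (φ : β → V)
    (hgood : IsGoodEmbedding G m D A (Vf.erase w) (Ef.erase (v, w)) c φ)
    (hA : (φ v, ℓ) ∈ A) :
    ∃ ψ : β → V, (∀ u ∈ Vf.erase w, ψ u = φ u) ∧
      IsGoodEmbedding G m D A Vf Ef c ψ :=
  statement_5_general G A m D hm Vf Ef c hforest hcard hmaxdeg w v ℓ hleaf hvw hcol hexp φ hgood hA
end

section
/- Let (G_1,…,G_n) be graphs on a vertex set V, let A ⊆ V × [n] be a color-set, and let m, D > 0 be integers. Let F be an oriented forest whose edges are colored with colors from [n], with a leaf w and an edge v → w of color ℓ, and let K = F − w be the forest obtained by removing the leaf w. Then for every (m, D, A)-good embedding φ: V(F) → V of F into (G_1,…,G_n), the restriction of φ to V(K) is an (m, D, A)-good embedding of K. -/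
open Finset

variable {β V : Type*}

/-- Rollback lemma: if `F` is an oriented edge-colored forest with a leaf `w` and an
edge `v → w` of color `ℓ`, and `φ` is an `(m, D, A)`-good embedding of `F` into
`(G_1,…,G_n)`, then the restriction of `φ` to `K = F − w` is an `(m, D, A)`-good
embedding of `K`. -/
theorem statement_6 [DecidableEq β] [Fintype V] [DecidableEq V] {n : ℕ}
    (G : Fin n → SimpleGraph V) (A : Set (V × Fin n)) (m D : ℕ)
    (hm : 0 < m) (hD : 0 < D)
    (Vf : Finset β) (Ef : Finset (β × β)) (c : β × β → Fin n)
    (hforest : IsOrientedForest Vf Ef)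
    (w v : β) (ℓ : Fin n)
    (hleaf : degAt Ef w = 1) (hvw : (v, w) ∈ Ef) (hcol : c (v, w) = ℓ)
    (φ : β → V)
    (hgood : IsGoodEmbedding G m D A Vf Ef c φ) :
    IsGoodEmbedding G m D A (Vf.erase w) (Ef.erase (v, w)) c φ := by
  classical
  obtain ⟨⟨hinj, hemb⟩, hineq⟩ := hgood
  obtain ⟨hVE, -, -⟩ := hforest
  have hwVf : w ∈ Vf := (hVE _ hvw).2.1
  have hvVf : v ∈ Vf := (hVE _ hvw).1
  have hvne : v ≠ w := (hVE _ hvw).2.2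
  have hφvw : φ v ≠ φ w := fun h =>
    hvne (hinj (by exact_mod_cast hvVf) (by exact_mod_cast hwVf) h)
  have honly : ∀ e ∈ Ef, (e.1 = w ∨ e.2 = w) → e = (v, w) := by
    intro e he hew
    by_contra hne
    have hsub : ({(v, w), e} : Finset (β × β)) ⊆
        Ef.filter (fun e => e.1 = w ∨ e.2 = w) := by
      intro x hx
      simp only [mem_insert, mem_singleton] at hx
      rcases hx with rfl | rfl <;> simp [mem_filter, hvw, he, hew]
    have h2 : 2 ≤ (Ef.filter (fun e => e.1 = w ∨ e.2 = w)).card := by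
      have hc := card_le_card hsub
      have hnm : (v, w) ∉ ({e} : Finset (β × β)) := by
        simp only [mem_singleton]
        exact fun h => hne h.symm
      rwa [card_insert_of_notMem hnm, card_singleton] at hc
    simp only [degAt] at hleaf
    omega
  have hInW : ∀ i, HasInEdge Ef c i w ↔ i = ℓ := by
    intro i
    constructor
    · rintro ⟨a, ha, hca⟩
      have ha' := honly (a, w) ha (Or.inr rfl)
      rw [ha'] at hca
      rw [← hca, hcol]
    · rintro rfl; exact ⟨v, hvw, hcol⟩
  have hInE : ∀ (i : Fin n) (u : β), u ≠ w →
      (HasInEdge (Ef.erase (v, w)) c i u ↔ HasInEdge Ef c i u) := by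
    intro i u hu
    constructor
    · rintro ⟨a, ha, hca⟩; exact ⟨a, mem_of_mem_erase ha, hca⟩
    · rintro ⟨a, ha, hca⟩
      refine ⟨a, mem_erase.mpr ⟨?_, ha⟩, hca⟩
      intro h; exact hu (congrArg Prod.snd h)
  refine ⟨⟨hinj.mono (by exact_mod_cast coe_subset.mpr (erase_subset _ _)),
      fun e he => hemb e (mem_of_mem_erase he)⟩, ?_⟩
  intro S hSA hSm
  have hbase := hineq S hSA hSm
  set iv : ℤ := if (φ v, ℓ) ∈ S then 1 else 0 with hiv
  set iw : ℤ := if (φ w, ℓ) ∈ S then 1 else 0 with hiw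
  set iN : ℤ := if φ w ∈ colorNbhd G S then 1 else 0 with hiN
  -- colored degree relation
  have hdeg : ∀ x i, colDegAt Ef c φ x i
      = colDegAt (Ef.erase (v, w)) c φ x i
        + (if (x, i) = (φ v, ℓ) ∨ (x, i) = (φ w, ℓ) then 1 else 0) := by
    intro x i
    have hfe : (Ef.erase (v, w)).filter (fun e => c e = i ∧ (φ e.1 = x ∨ φ e.2 = x))
        = (Ef.filter (fun e => c e = i ∧ (φ e.1 = x ∨ φ e.2 = x))).erase (v, w) := by
      ext e
      simp only [mem_filter, mem_erase]
      tauto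
    simp only [colDegAt, hfe]
    by_cases hmem : (v, w) ∈ Ef.filter (fun e => c e = i ∧ (φ e.1 = x ∨ φ e.2 = x))
    · rw [card_erase_of_mem hmem]
      have hpos := card_pos.mpr ⟨(v, w), hmem⟩
      simp only [mem_filter] at hmem
      obtain ⟨-, h1, h2⟩ := hmem
      have hiℓ : i = ℓ := by rw [← h1, hcol]
      have hcond : (x, i) = (φ v, ℓ) ∨ (x, i) = (φ w, ℓ) := by
        rcases h2 with h2 | h2
        · exact Or.inl (by rw [← h2, hiℓ])
        · exact Or.inr (by rw [← h2, hiℓ])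
      rw [if_pos hcond]
      omega
    · rw [erase_eq_of_notMem hmem, if_neg ?_]
      · omega
      · rintro (hc | hc) <;> rw [Prod.mk.injEq] at hc <;>
          exact hmem (mem_filter.mpr ⟨hvw, by rw [hcol, hc.2], by simp [hc.1]⟩)
  -- sum relation
  have hsum : ∑ q ∈ S, ((D : ℤ) - colDegAt (Ef.erase (v, w)) c φ q.1 q.2)
      = (∑ q ∈ S, ((D : ℤ) - colDegAt Ef c φ q.1 q.2)) + iv + iw := by
    have hpt : ∀ q ∈ S, ((D : ℤ) - colDegAt (Ef.erase (v, w)) c φ q.1 q.2)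
        = ((D : ℤ) - colDegAt Ef c φ q.1 q.2)
          + (if q = (φ v, ℓ) then (1 : ℤ) else 0)
          + (if q = (φ w, ℓ) then (1 : ℤ) else 0) := by
      rintro ⟨x, i⟩ -
      have h := hdeg x i
      dsimp only
      by_cases h1 : (x, i) = (φ v, ℓ)
      · have h2 : (x, i) ≠ (φ w, ℓ) := by
          rw [h1]; simp [Prod.ext_iff, hφvw]
        rw [if_pos h1, if_neg h2]
        rw [if_pos (Or.inl h1)] at h
        omega
      · by_cases h2 : (x, i) = (φ w, ℓ)
        · rw [if_neg h1, if_pos h2]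
          rw [if_pos (Or.inr h2)] at h
          omega
        · rw [if_neg h1, if_neg h2]
          rw [if_neg (by tauto)] at h
          omega
    rw [Finset.sum_congr rfl hpt, Finset.sum_add_distrib, Finset.sum_add_distrib,
      Finset.sum_ite_eq' S (φ v, ℓ) (fun _ => (1 : ℤ)),
      Finset.sum_ite_eq' S (φ w, ℓ) (fun _ => (1 : ℤ))]
  -- intersection as filters
  have hXF : (((S : Set (V × Fin n)) ∩
        {q | ∃ u ∈ Vf, φ u = q.1 ∧ HasInEdge Ef c q.2 u}).ncard : ℤ)
      = ((S.filter (fun q => ∃ u ∈ Vf, φ u = q.1 ∧ HasInEdge Ef c q.2 u)).card : ℤ) := by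
    rw [← Set.ncard_coe_finset]
    congr 2
    ext q
    simp only [Finset.coe_filter, Set.mem_inter_iff, Set.mem_setOf_eq, Finset.mem_coe]
  have hXK : (((S : Set (V × Fin n)) ∩
        {q | ∃ u ∈ Vf.erase w, φ u = q.1 ∧ HasInEdge (Ef.erase (v, w)) c q.2 u}).ncard : ℤ)
      = ((S.filter (fun q => ∃ u ∈ Vf.erase w, φ u = q.1 ∧
          HasInEdge (Ef.erase (v, w)) c q.2 u)).card : ℤ) := by
    rw [← Set.ncard_coe_finset]
    congr 2
    ext q
    simp only [Finset.coe_filter, Set.mem_inter_iff, Set.mem_setOf_eq, Finset.mem_coe]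
  -- filter relation
  have hfilt : S.filter (fun q => ∃ u ∈ Vf.erase w, φ u = q.1 ∧
        HasInEdge (Ef.erase (v, w)) c q.2 u)
      = (S.filter (fun q => ∃ u ∈ Vf, φ u = q.1 ∧ HasInEdge Ef c q.2 u)).erase (φ w, ℓ) := by
    ext q
    simp only [mem_filter, mem_erase]
    constructor
    · rintro ⟨hqS, u, hu, hφu, hin⟩
      obtain ⟨hune, huVf⟩ := hu
      refine ⟨?_, hqS, u, huVf, hφu, (hInE _ _ hune).mp hin⟩
      intro hq
      apply hune
      apply hinj (by exact_mod_cast huVf) (by exact_mod_cast hwVf)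
      rw [hφu, hq]
    · rintro ⟨hqne, hqS, u, huVf, hφu, hin⟩
      have hune : u ≠ w := by
        rintro rfl
        exact hqne (Prod.ext_iff.mpr ⟨hφu.symm, (hInW q.2).mp hin⟩)
      exact ⟨hqS, u, ⟨hune, huVf⟩, hφu, (hInE _ _ hune).mpr hin⟩
  have hmemF : (φ w, ℓ) ∈ S.filter (fun q => ∃ u ∈ Vf, φ u = q.1 ∧ HasInEdge Ef c q.2 u)
      ↔ (φ w, ℓ) ∈ S := by
    simp only [mem_filter]
    exact ⟨fun h => h.1, fun h => ⟨h, w, hwVf, rfl, (hInW ℓ).mpr rfl⟩⟩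
  have hcardK : ((S.filter (fun q => ∃ u ∈ Vf.erase w, φ u = q.1 ∧
        HasInEdge (Ef.erase (v, w)) c q.2 u)).card : ℤ)
      = ((S.filter (fun q => ∃ u ∈ Vf, φ u = q.1 ∧ HasInEdge Ef c q.2 u)).card : ℤ) - iw := by
    rw [hfilt]
    by_cases h : (φ w, ℓ) ∈ S
    · rw [card_erase_of_mem (hmemF.mpr h)]
      have hpos := card_pos.mpr ⟨(φ w, ℓ), hmemF.mpr h⟩
      rw [hiw, if_pos h]
      push_cast
      omega
    · rw [erase_eq_of_notMem (fun hc => h (hmemF.mp hc)), hiw, if_neg h]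
      omega
  -- image relation
  have hφwnot : φ w ∉ φ '' ((Vf.erase w : Finset β) : Set β) := by
    rintro ⟨u, hu, hφu⟩
    obtain ⟨hune, huVf⟩ := mem_erase.mp (by exact_mod_cast hu)
    exact hune (hinj (by exact_mod_cast huVf) (by exact_mod_cast hwVf) hφu)
  have himg : φ '' ((Vf : Finset β) : Set β)
      = insert (φ w) (φ '' ((Vf.erase w : Finset β) : Set β)) := by
    conv_lhs => rw [← Finset.insert_erase hwVf, Finset.coe_insert, Set.image_insert_eq]
  have hNset : colorNbhd G S \ (φ '' ((Vf.erase w : Finset β) : Set β))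
      = (colorNbhd G S \ (φ '' ((Vf : Finset β) : Set β)))
        ∪ (colorNbhd G S ∩ {φ w}) := by
    rw [himg]
    ext x
    simp only [Set.mem_diff, Set.mem_union, Set.mem_inter_iff, Set.mem_insert_iff,
      Set.mem_singleton_iff]
    by_cases hx : x = φ w
    · subst hx; tauto
    · tauto
  have hdisj : Disjoint (colorNbhd G S \ (φ '' ((Vf : Finset β) : Set β)))
      (colorNbhd G S ∩ {φ w}) := by
    rw [Set.disjoint_left]
    rintro x ⟨-, hx⟩ ⟨-, hx'⟩
    simp only [Set.mem_singleton_iff] at hx'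
    subst hx'
    exact hx (by rw [himg]; exact Set.mem_insert _ _)
  have hRHS : ((colorNbhd G S \ (φ '' ((Vf.erase w : Finset β) : Set β))).ncard : ℤ)
      = ((colorNbhd G S \ (φ '' ((Vf : Finset β) : Set β))).ncard : ℤ) + iN := by
    rw [hNset, Set.ncard_union_eq hdisj (Set.toFinite _) (Set.toFinite _)]
    push_cast
    congr 1
    by_cases h : φ w ∈ colorNbhd G S
    · have hs : colorNbhd G S ∩ {φ w} = {φ w} := by
        ext x
        simp only [Set.mem_inter_iff, Set.mem_singleton_iff]
        exact ⟨And.right, fun hx => ⟨hx ▸ h, hx⟩⟩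
      rw [hs, Set.ncard_singleton, hiN, if_pos h]
      exact Nat.cast_one
    · have hs : colorNbhd G S ∩ {φ w} = ∅ := by
        ext x
        simp only [Set.mem_inter_iff, Set.mem_singleton_iff, Set.mem_empty_iff_false,
          iff_false, not_and]
        rintro hx rfl
        exact h hx
      rw [hs, Set.ncard_empty, hiN, if_neg h]
      rfl
  have hivN : iv ≤ iN := by
    rw [hiv, hiN]
    by_cases h : (φ v, ℓ) ∈ S
    · have hN : φ w ∈ colorNbhd G S := ⟨(φ v, ℓ), h, by
        have hadj := hemb (v, w) hvw
        rwa [hcol] at hadj⟩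
      simp [h, hN]
    · rw [if_neg h]
      split_ifs <;> norm_num
  rw [hXF] at hbase
  rw [hXK, hcardK, hsum, hRHS]
  linarith
end

section
/- Let n ≥ 3, let V be a vertex set of size n partitioned as V = L ∪ R, let ε ∈ (0,1), and let (G_1,…,G_n) and H be graphs on V. Suppose there is a set X₀ ⊆ V with |X₀| ≤ εn such that: (i) for every Y ⊆ L, the induced subgraph of H on V ∖ (X₀ ∪ Y) is Hamilton-connected; and (ii) for every map χ:[n]→[n] there exists a χ-colored path P (with respect to (G_1,…,G_n)) with at least one edge, with X₀ ⊆ V(P) ⊆ X₀ ∪ L, and with both endpoints outside X₀. Then for every map χ:[n]→[n], the tuple (G_1 ∪ H, …, G_n ∪ H) contains a χ-colored Hamilton cycle. -/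
/-- The fixed left part `L` of the partition `V = L ∪ R`, of size `⌊n/2⌋`. -/
def leftSet (n : ℕ) : Finset (Fin n) := Finset.univ.filter fun v => (v : ℕ) < n / 2

/-- A graph is Hamilton-connected if any two distinct vertices are the endpoints
of some Hamilton path. -/
def HamiltonConnected {α : Type*} [DecidableEq α] (G : SimpleGraph α) : Prop :=
  ∀ u v : α, u ≠ v → ∃ w : G.Walk u v, w.IsHamiltonian

/-- `(G_1, …, G_n)` has a `χ`-colored Hamilton cycle: there is a cyclic ordering
`v 0, v 1, …, v (n-1)` of all the vertices such that the `i`-th edge of the cycle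
belongs to `G (χ i)`.  (A Hamilton cycle requires at least `3` vertices.) -/
def HasChiHamCycle (n : ℕ) (G : Fin n → SimpleGraph (Fin n)) (χ : Fin n → Fin n) : Prop :=
  3 ≤ n ∧ ∃ v : Fin n ≃ Fin n, ∀ i : Fin n, (G (χ i)).Adj (v i) (v (finRotate n i))

lemma walk_support_getElem {α : Type*} {G : SimpleGraph α} {u v : α} (w : G.Walk u v) :
    ∀ (i : ℕ) (h : i < w.support.length), w.support[i] = w.getVert i := by
  induction w with
  | nil =>
    intro i h
    simp only [SimpleGraph.Walk.support_nil, List.length_singleton] at h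
    obtain rfl : i = 0 := by omega
    simp [SimpleGraph.Walk.getVert_zero]
  | cons hadj q ih =>
    intro i h
    cases i with
    | zero => simp [SimpleGraph.Walk.support_cons, SimpleGraph.Walk.getVert_zero]
    | succ j =>
      have h' : j < q.support.length := by
        rw [SimpleGraph.Walk.support_cons] at h
        simpa using Nat.lt_of_succ_lt_succ h
      simp only [SimpleGraph.Walk.support_cons, List.getElem_cons_succ,
        SimpleGraph.Walk.getVert_cons_succ]
      exact ih j h'

lemma walk_getVert_inj {α : Type*} {G : SimpleGraph α} {u v : α} {w : G.Walk u v}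
    (hw : w.support.Nodup) {i j : ℕ} (hi : i ≤ w.length) (hj : j ≤ w.length)
    (h : w.getVert i = w.getVert j) : i = j := by
  have hi' : i < w.support.length := by rw [SimpleGraph.Walk.length_support]; omega
  have hj' : j < w.support.length := by rw [SimpleGraph.Walk.length_support]; omega
  rw [← walk_support_getElem w i hi', ← walk_support_getElem w j hj'] at h
  exact (hw.getElem_inj_iff).mp h

theorem statement_8 (n : ℕ) (hn : 3 ≤ n) (ε : ℝ) (hε0 : 0 < ε) (hε1 : ε < 1)
    (G : Fin n → SimpleGraph (Fin n)) (H : SimpleGraph (Fin n))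
    (X₀ : Finset (Fin n)) (hX₀ : (X₀.card : ℝ) ≤ ε * n)
    (hHamConn : ∀ Y : Finset (Fin n), Y ⊆ leftSet n →
      HamiltonConnected (H.induce (↑(X₀ ∪ Y) : Set (Fin n))ᶜ))
    (hPath : ∀ χ : Fin n → Fin n, ∃ (k : ℕ) (hk : k < n) (v : Fin (k + 1) → Fin n),
      1 ≤ k ∧ Function.Injective v ∧
      (∀ i : Fin k, (G (χ (Fin.castLE hk.le i))).Adj (v i.castSucc) (v i.succ)) ∧
      (∀ x ∈ X₀, ∃ i, v i = x) ∧
      (∀ i, v i ∈ X₀ ∨ v i ∈ leftSet n) ∧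
      v 0 ∉ X₀ ∧ v (Fin.last k) ∉ X₀) :
    ∀ χ : Fin n → Fin n, HasChiHamCycle n (fun i => G i ⊔ H) χ := by
  intro χ
  classical
  obtain ⟨k, hk, p, hk1, hpinj, hpadj, hcov, hLX, h0, hlast⟩ := hPath χ
  have hne : p 0 ≠ p (Fin.last k) := by
    intro h
    have := hpinj h
    have := congrArg Fin.val this
    simp [Fin.last] at this
    omega
  set Pset : Finset (Fin n) := Finset.univ.image p with hPset
  have hmemP : ∀ i, p i ∈ Pset := fun i => Finset.mem_image.mpr ⟨i, Finset.mem_univ _, rfl⟩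
  set T : Finset (Fin n) := Pset \ {p 0, p (Fin.last k)} with hTdef
  have hX₀T : X₀ ⊆ T := by
    intro x hx
    obtain ⟨i, hi⟩ := hcov x hx
    rw [hTdef, Finset.mem_sdiff]
    refine ⟨hi ▸ hmemP i, ?_⟩
    simp only [Finset.mem_insert, Finset.mem_singleton]
    rintro (rfl | rfl)
    · exact h0 hx
    · exact hlast hx
  set Y : Finset (Fin n) := T \ X₀ with hYdef
  have hYL : Y ⊆ leftSet n := by
    intro y hy
    rw [hYdef, Finset.mem_sdiff] at hy
    obtain ⟨hyT, hyX⟩ := hy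
    rw [hTdef, Finset.mem_sdiff] at hyT
    obtain ⟨hyP, -⟩ := hyT
    obtain ⟨i, -, rfl⟩ := Finset.mem_image.mp hyP
    rcases hLX i with h | h
    · exact absurd h hyX
    · exact h
  have hXY : X₀ ∪ Y = T := Finset.union_sdiff_of_subset hX₀T
  have hmemTiff : ∀ x, x ∈ T ↔ x ∈ Pset ∧ x ≠ p 0 ∧ x ≠ p (Fin.last k) := by
    intro x
    rw [hTdef, Finset.mem_sdiff]
    simp only [Finset.mem_insert, Finset.mem_singleton]
    tauto
  have ha : p (Fin.last k) ∈ (↑(X₀ ∪ Y) : Set (Fin n))ᶜ := by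
    rw [Set.mem_compl_iff, Finset.mem_coe, hXY, hmemTiff]
    tauto
  have hb : p 0 ∈ (↑(X₀ ∪ Y) : Set (Fin n))ᶜ := by
    rw [Set.mem_compl_iff, Finset.mem_coe, hXY, hmemTiff]
    tauto
  obtain ⟨w, hw⟩ := hHamConn Y hYL ⟨_, ha⟩ ⟨_, hb⟩
    (by simp only [ne_eq, Subtype.mk.injEq]; exact fun h => hne h.symm)
  have hnodup : w.support.Nodup := hw.isPath.support_nodup
  -- cardinalities
  have hPcard : Pset.card = k + 1 := by
    rw [hPset, Finset.card_image_of_injective _ hpinj, Finset.card_univ, Fintype.card_fin]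
  have hTcard : T.card = k - 1 := by
    have hsub : ({p 0, p (Fin.last k)} : Finset (Fin n)) ⊆ Pset := by
      intro x hx
      simp only [Finset.mem_insert, Finset.mem_singleton] at hx
      rcases hx with rfl | rfl <;> exact hmemP _
    rw [hTdef, Finset.card_sdiff_of_subset hsub, hPcard, Finset.card_pair hne]
    omega
  have hcardS : Fintype.card ((↑(X₀ ∪ Y) : Set (Fin n))ᶜ : Set (Fin n)) = n - (k - 1) := by
    rw [← Set.toFinset_card]
    have : ((↑(X₀ ∪ Y) : Set (Fin n))ᶜ).toFinset = (X₀ ∪ Y)ᶜ := by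
      simp
    rw [this, Finset.card_compl, hXY, hTcard, Fintype.card_fin]
  have hwlen : w.length = n - k := by
    have := hw.length_eq
    rw [hcardS] at this
    omega
  -- the cyclic ordering
  set g : Fin n → Fin n := fun i =>
    if h : (i : ℕ) < k + 1 then p ⟨(i : ℕ), h⟩ else ↑(w.getVert ((i : ℕ) - k)) with hgdef
  have hg_lo : ∀ (i : Fin n) (h : (i : ℕ) < k + 1), g i = p ⟨(i : ℕ), h⟩ := by
    intro i h
    simp only [hgdef, dif_pos h]
  have hg_hi : ∀ (i : Fin n), k ≤ (i : ℕ) → g i = ↑(w.getVert ((i : ℕ) - k)) := by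
    intro i h
    rcases eq_or_lt_of_le h with heq | hlt
    · have h2 : (i : ℕ) - k = 0 := by omega
      rw [hg_lo i (by omega), h2, SimpleGraph.Walk.getVert_zero]
      show p _ = p (Fin.last k)
      congr 1
      apply Fin.ext
      simp only [Fin.val_last]
      omega
    · simp only [hgdef]
      rw [dif_neg (by omega)]
  -- endpoint values of the walk
  have hwa : (↑(w.getVert 0) : Fin n) = p (Fin.last k) := by
    rw [SimpleGraph.Walk.getVert_zero]
  have hwb : (↑(w.getVert (n - k)) : Fin n) = p 0 := by
    have h1 : w.getVert (n - k) = ⟨p 0, hb⟩ := by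
      rw [← hwlen]; exact SimpleGraph.Walk.getVert_length w
    rw [h1]
  have hgetmem : ∀ j : ℕ, (↑(w.getVert j) : Fin n) ∉ T := by
    intro j hjT
    rw [← hXY] at hjT
    exact (w.getVert j).2 (Finset.mem_coe.mpr hjT)
  -- injectivity
  have hinj : Function.Injective g := by
    intro i j hij
    by_cases hi : (i : ℕ) < k + 1 <;> by_cases hj : (j : ℕ) < k + 1
    · rw [hg_lo i hi, hg_lo j hj] at hij
      have := hpinj hij
      simp only [Fin.mk.injEq] at this
      exact Fin.ext this
    · exfalso
      rw [hg_lo i hi, hg_hi j (by omega)] at hij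
      have hnotT : p ⟨(i : ℕ), hi⟩ ∉ T := hij ▸ hgetmem ((j : ℕ) - k)
      have hiP : p ⟨(i : ℕ), hi⟩ ∈ Pset := hmemP _
      rw [hmemTiff] at hnotT
      push_neg at hnotT
      have hjk1 : 1 ≤ (j : ℕ) - k := by omega
      have hjk2 : (j : ℕ) - k ≤ w.length := by rw [hwlen]; omega
      rcases eq_or_ne (p ⟨(i : ℕ), hi⟩) (p 0) with heq | hneq'
      · have hval : (↑(w.getVert (n - k)) : Fin n) = ↑(w.getVert ((j : ℕ) - k)) := by
          rw [hwb]; exact heq.symm.trans hij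
        have hij' : w.getVert (n - k) = w.getVert ((j : ℕ) - k) :=
          Subtype.coe_injective hval
        have := walk_getVert_inj hnodup (le_of_eq hwlen.symm) hjk2 hij'
        omega
      · have heq := hnotT hiP hneq'
        have hval : (↑(w.getVert 0) : Fin n) = ↑(w.getVert ((j : ℕ) - k)) := by
          rw [hwa]; exact heq.symm.trans hij
        have hij' : w.getVert 0 = w.getVert ((j : ℕ) - k) :=
          Subtype.coe_injective hval
        have := walk_getVert_inj hnodup (Nat.zero_le _) hjk2 hij'
        omega
    · exfalso
      rw [hg_lo j hj, hg_hi i (by omega)] at hij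
      have hnotT : p ⟨(j : ℕ), hj⟩ ∉ T := hij ▸ hgetmem ((i : ℕ) - k)
      have hjP : p ⟨(j : ℕ), hj⟩ ∈ Pset := hmemP _
      rw [hmemTiff] at hnotT
      push_neg at hnotT
      have hik1 : 1 ≤ (i : ℕ) - k := by omega
      have hik2 : (i : ℕ) - k ≤ w.length := by rw [hwlen]; omega
      rcases eq_or_ne (p ⟨(j : ℕ), hj⟩) (p 0) with heq | hneq'
      · have hval : (↑(w.getVert ((i : ℕ) - k)) : Fin n) = ↑(w.getVert (n - k)) := by
          rw [hwb]; exact hij.trans heq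
        have hij' : w.getVert ((i : ℕ) - k) = w.getVert (n - k) :=
          Subtype.coe_injective hval
        have := walk_getVert_inj hnodup hik2 (le_of_eq hwlen.symm) hij'
        omega
      · have heq := hnotT hjP hneq'
        have hval : (↑(w.getVert ((i : ℕ) - k)) : Fin n) = ↑(w.getVert 0) := by
          rw [hwa]; exact hij.trans heq
        have hij' : w.getVert ((i : ℕ) - k) = w.getVert 0 :=
          Subtype.coe_injective hval
        have := walk_getVert_inj hnodup hik2 (Nat.zero_le _) hij'
        omega
    · rw [hg_hi i (by omega), hg_hi j (by omega)] at hij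
      have h1 : (i : ℕ) - k ≤ w.length := by rw [hwlen]; omega
      have h2 : (j : ℕ) - k ≤ w.length := by rw [hwlen]; omega
      have := walk_getVert_inj hnodup h1 h2 (Subtype.coe_injective hij)
      apply Fin.ext
      omega
  have hbij : Function.Bijective g := Finite.injective_iff_bijective.mp hinj
  refine ⟨hn, Equiv.ofBijective g hbij, ?_⟩
  intro i
  show (G (χ i) ⊔ H).Adj (g i) (g (finRotate n i))
  obtain ⟨m, rfl⟩ : ∃ m, n = m + 1 := ⟨n - 1, by omega⟩
  have hrot : ((finRotate (m + 1) i : Fin (m + 1)) : ℕ)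
      = if i = Fin.last m then 0 else (i : ℕ) + 1 := by
    rw [finRotate_succ_apply, Fin.val_add_one]
  by_cases hilast : i = Fin.last m
  · -- last edge: from getVert (m - k) to p 0, an H edge
    rw [if_pos hilast] at hrot
    have hival : (i : ℕ) = m := by rw [hilast]; rfl
    have hik : k ≤ (i : ℕ) := by omega
    rw [hg_hi i hik]
    have hrotlt : ((finRotate (m + 1) i : Fin (m + 1)) : ℕ) < k + 1 := by omega
    rw [hg_lo _ hrotlt]
    have h1 : p ⟨((finRotate (m + 1) i : Fin (m + 1)) : ℕ), hrotlt⟩ = p 0 := by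
      congr 1
      apply Fin.ext
      exact hrot
    rw [h1]
    have hadj := w.adj_getVert_succ (i := (i : ℕ) - k) (by rw [hwlen]; omega)
    have hadj' : H.Adj ↑(w.getVert ((i : ℕ) - k)) ↑(w.getVert ((i : ℕ) - k + 1)) := hadj
    have h2 : (i : ℕ) - k + 1 = m + 1 - k := by omega
    rw [h2, hwb] at hadj'
    exact Or.inr hadj'
  · rw [if_neg hilast] at hrot
    have hilt : (i : ℕ) < m := by
      have := Fin.val_lt_last hilast
      omega
    by_cases hik : (i : ℕ) < k
    · -- colored edge from the path
      rw [hg_lo i (by omega)]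
      have hrotlt : ((finRotate (m + 1) i : Fin (m + 1)) : ℕ) < k + 1 := by omega
      rw [hg_lo _ hrotlt]
      have hadj := hpadj ⟨(i : ℕ), hik⟩
      have hc : Fin.castLE hk.le ⟨(i : ℕ), hik⟩ = i := Fin.ext rfl
      rw [hc] at hadj
      have hcs : (⟨(i : ℕ), hik⟩ : Fin k).castSucc = ⟨(i : ℕ), by omega⟩ := rfl
      have hsc : (⟨(i : ℕ), hik⟩ : Fin k).succ = ⟨(i : ℕ) + 1, by omega⟩ := rfl
      rw [hcs, hsc] at hadj
      have h1 : p ⟨((finRotate (m + 1) i : Fin (m + 1)) : ℕ), hrotlt⟩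
          = p ⟨(i : ℕ) + 1, by omega⟩ := by
        congr 1
        apply Fin.ext
        exact hrot
      rw [h1]
      exact Or.inl hadj
    · -- H edge inside the walk
      have hik' : k ≤ (i : ℕ) := by omega
      rw [hg_hi i hik']
      have hrotk : k ≤ ((finRotate (m + 1) i : Fin (m + 1)) : ℕ) := by omega
      rw [hg_hi _ hrotk]
      have hadj := w.adj_getVert_succ (i := (i : ℕ) - k) (by rw [hwlen]; omega)
      have hadj' : H.Adj ↑(w.getVert ((i : ℕ) - k)) ↑(w.getVert ((i : ℕ) - k + 1)) := hadj
      have h2 : ((finRotate (m + 1) i : Fin (m + 1)) : ℕ) - k = (i : ℕ) - k + 1 := by omega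
      rw [h2]
      exact Or.inr hadj'
end

section
/- Let (G_1,…,G_n) be fixed graphs on a vertex set V of size n, let χ:[n]→[n] be any map, let p' ∈ [0,1], and let H_0, H_1, …, H_n be independent random graphs on V, each sampled from G(n,p'). Then the probability that (G_1 ∪ H_0, …, G_n ∪ H_0) contains a χ-colored Hamilton cycle is at most the probability that (G_1 ∪ H_1, …, G_n ∪ H_n) contains a χ-colored Hamilton cycle. -/
open MeasureTheory

/-- The Bernoulli measure on `Bool` with success probability `p` (a real number,
clamped into `[0,1]`; for `p ∈ [0,1]` this is the genuine Bernoulli measure). -/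
noncomputable def bernoulliMeasure (p : ℝ) : Measure Bool :=
  (PMF.bernoulli (min (Real.toNNReal p) 1) (min_le_right _ _)).toMeasure

/-- The Erdős–Rényi measure `G(n,p)`. -/
noncomputable def erMeasure (n : ℕ) (p : ℝ) : Measure (Sym2 (Fin n) → Bool) :=
  Measure.pi fun _ => bernoulliMeasure p

/-- The product measure for an `ι`-indexed tuple of independent samples from `G(n,p)`. -/
noncomputable def erTupleMeasure (ι : Type*) [Fintype ι] (n : ℕ) (p : ℝ) :
    Measure (ι → Sym2 (Fin n) → Bool) :=
  Measure.pi fun _ => erMeasure n p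

/-- The simple graph on `Fin n` determined by an outcome `f : Sym2 (Fin n) → Bool`. -/
def graphOf {n : ℕ} (f : Sym2 (Fin n) → Bool) : SimpleGraph (Fin n) :=
  SimpleGraph.fromEdgeSet {e | f e = true}

/-!
Interpolate between the two tuples one (colour, edge) slot at a time: for a set `T` of slots,
colour `c` reads the edge `e` from `H_c` if `(c, e) ∈ T` and from `H_0` otherwise. Moving one
slot `(c₀, e₀)` into `T` cannot decrease the probability. Conditionally on all other coordinates
the event is a monotone function of the two bits `u = H_0(e₀)` and `v = H_{c₀}(e₀)`, evaluated at
`(u, u)` before the move and at `(u, v)` after it. A Hamilton cycle uses `e₀` at most once, so it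
needs `e₀` in only one colour: the event at `(1, 1)` already holds at `(1, 0)` or at `(0, 1)`.
Pairing each configuration with the one obtained by swapping the two bits then gives the
inequality.
-/

open Function

namespace MeasureTheory

theorem measure_le_of_indicator_add_comp_le {α : Type*} [MeasurableSpace α] {μ : Measure α}
    {σ : α → α} (hσ : MeasurePreserving σ μ μ) {S S' : Set α} (hS : MeasurableSet S)
    (hS' : MeasurableSet S')
    (h : ∀ x, S.indicator (1 : α → ENNReal) x + S.indicator 1 (σ x) ≤
      S'.indicator 1 x + S'.indicator 1 (σ x)) :
    μ S ≤ μ S' := by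
  have hdouble : ∀ {s : Set α}, MeasurableSet s →
      μ s + μ s = ∫⁻ x, s.indicator (1 : α → ENNReal) x + s.indicator 1 (σ x) ∂μ :=
    fun {s} hs => by
      rw [lintegral_add_left (measurable_one.indicator hs), lintegral_indicator_one hs]
      nth_rw 2 [← hσ.measure_preimage hs.nullMeasurableSet]
      rw [← lintegral_indicator_one (hσ.measurable hs)]
      rfl
  have key : μ S + μ S ≤ μ S' + μ S' := by
    rw [hdouble hS, hdouble hS']
    exact lintegral_mono h
  by_contra! hlt
  exact (ENNReal.add_lt_add hlt hlt).not_ge key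

theorem measurePreserving_pi_comp_perm {κ β : Type*} [Fintype κ] [MeasurableSpace β]
    (ν : Measure β) [SigmaFinite ν] (e : Equiv.Perm κ) :
    MeasurePreserving (fun f : κ → β => f ∘ e) (Measure.pi fun _ => ν)
      (Measure.pi fun _ => ν) := by
  convert measurePreserving_arrowCongr' (fun _ => ν) (fun _ => ν) e.symm
    (MeasurableEquiv.refl β) fun _ => MeasurePreserving.id ν
  rfl

theorem Measure.map_curry_pi {ι κ α : Type*} [Fintype ι] [Fintype κ] [MeasurableSpace α]
    [MeasurableSingletonClass α] [Countable α] (ν : Measure α) [SigmaFinite ν] :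
    (Measure.pi fun _ : ι × κ => ν).map (MeasurableEquiv.curry ι κ α) =
      Measure.pi fun _ : ι => Measure.pi fun _ : κ => ν := by
  refine Measure.ext_of_singleton fun ω => ?_
  rw [MeasurableEquiv.map_apply]
  have : MeasurableEquiv.curry ι κ α ⁻¹' {ω} = {uncurry ω} := by
    ext f
    simp only [Set.mem_preimage, MeasurableEquiv.coe_curry, Set.mem_singleton_iff]
    exact ⟨fun h => h ▸ (uncurry_curry f).symm, fun h => h ▸ curry_uncurry ω⟩
  rw [this, Measure.pi_singleton, Measure.pi_singleton, Fintype.prod_prod_type]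
  simp

end MeasureTheory

section SwapCoordinates

variable {κ : Type*} [DecidableEq κ] {P : (κ → Bool) → Prop} {a b : κ}

private lemma ite_add_ite_le {p q r s : Prop} [Decidable p] [Decidable q] [Decidable r]
    [Decidable s] (hp : p → r ∧ s) (hq : q → r ∨ s) :
    ((if p then 1 else 0) + if q then 1 else 0 : ENNReal) ≤
      (if r then 1 else 0) + if s then 1 else 0 := by
  by_cases p <;> by_cases q <;> by_cases r <;> by_cases s <;> simp_all

/-- The left side counts `update (y ∘ swap a b) b false`, which lies below both `y` and
`y ∘ swap a b`, and `update y b true`, from which `hsplit` reaches one of them. -/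
theorem indicator_update_add_comp_swap_le_of_true_false (hP : Monotone P)
    (hsplit : ∀ f, P f → P (update f a false) ∨ P (update f b false)) {y : κ → Bool}
    (hya : y a = true) (hyb : y b = false) :
    {f | P (update f b (f a))}.indicator (1 : (κ → Bool) → ENNReal) y +
        {f | P (update f b (f a))}.indicator 1 (y ∘ Equiv.swap a b) ≤
      {f | P f}.indicator 1 y + {f | P f}.indicator 1 (y ∘ Equiv.swap a b) := by
  classical
  have hab : a ≠ b := fun h => by simp [h, hyb] at hya
  simp only [Set.indicator_apply, Set.mem_ofPred_eq, Pi.one_apply, comp_apply,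
    Equiv.swap_apply_left, hya, hyb]
  rw [add_comm (if P (update y b true) then _ else _)]
  refine ite_add_ite_le (fun h => ⟨hP ?_ h, hP ?_ h⟩) fun h => ?_
  · intro k
    by_cases hk : k = b
    · simp [hk]
    · by_cases hka : k = a
      · simp [hka, hab, hyb]
      · simp [hka, hk, Equiv.swap_apply_of_ne_of_ne]
  · exact update_le_self_iff.mpr (Bool.false_le _)
  · have hlo : update (update y b true) a false = y ∘ Equiv.swap a b := by
      ext k
      by_cases hka : k = a
      · simp [hka, hyb]
      · by_cases hk : k = b
        · simp [hk, hab.symm, hya]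
        · simp [hka, hk, Equiv.swap_apply_of_ne_of_ne]
    have hhi : update (update y b true) b false = y := by
      rw [update_idem, ← hyb, update_eq_self]
    simpa only [hlo, hhi] using (hsplit _ h).symm

theorem indicator_update_add_comp_swap_le (hP : Monotone P)
    (hsplit : ∀ f, P f → P (update f a false) ∨ P (update f b false)) (x : κ → Bool) :
    {f | P (update f b (f a))}.indicator (1 : (κ → Bool) → ENNReal) x +
        {f | P (update f b (f a))}.indicator 1 (x ∘ Equiv.swap a b) ≤
      {f | P f}.indicator 1 x + {f | P f}.indicator 1 (x ∘ Equiv.swap a b) := by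
  classical
  by_cases hx : x a = x b
  · have hfix : x ∘ Equiv.swap a b = x := by
      ext k
      rw [comp_apply, Equiv.swap_apply_def]
      split_ifs with hka hkb
      exacts [hka ▸ hx.symm, hkb ▸ hx, rfl]
    have hupd : update x b (x a) = x := by rw [hx, update_eq_self]
    simp [Set.indicator_apply, hfix, hupd]
  · cases hxa : x a <;> cases hxb : x b <;> simp only [hxa, hxb, not_true_eq_false] at hx
    · have hswap_swap : (x ∘ Equiv.swap a b) ∘ Equiv.swap a b = x := by
        ext; simp
      simpa [hswap_swap, add_comm] using
        indicator_update_add_comp_swap_le_of_true_false hP hsplit (y := x ∘ Equiv.swap a b)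
          (by simp [hxb]) (by simp [hxa])
    · exact indicator_update_add_comp_swap_le_of_true_false hP hsplit hxa hxb

theorem pi_setOf_update_le [Fintype κ] (ν : Measure Bool) [SigmaFinite ν] (hP : Monotone P)
    (hsplit : ∀ f, P f → P (update f a false) ∨ P (update f b false)) :
    Measure.pi (fun _ : κ => ν) {f | P (update f b (f a))} ≤
      Measure.pi (fun _ => ν) {f | P f} :=
  measure_le_of_indicator_add_comp_le (measurePreserving_pi_comp_perm ν (Equiv.swap a b))
    (Set.toFinite _).measurableSet (Set.toFinite _).measurableSet
    (indicator_update_add_comp_swap_le hP hsplit)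

end SwapCoordinates

theorem graphOf_mono {n : ℕ} {g g' : Sym2 (Fin n) → Bool} (h : g ≤ g') :
    graphOf g ≤ graphOf g' := by
  intro u v
  simp only [graphOf, SimpleGraph.fromEdgeSet_adj, Set.mem_ofPred_eq]
  exact fun ⟨huv, hne⟩ => ⟨Bool.le_iff_imp.mp (h _) huv, hne⟩

theorem deleteEdges_graphOf_le {n : ℕ} {g g' : Sym2 (Fin n) → Bool} {e₀ : Sym2 (Fin n)}
    (h : ∀ e ≠ e₀, g e ≤ g' e) : (graphOf g).deleteEdges {e₀} ≤ graphOf g' := by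
  intro u v
  simp only [graphOf, SimpleGraph.deleteEdges_adj, SimpleGraph.fromEdgeSet_adj,
    Set.mem_ofPred_eq, Set.mem_singleton_iff]
  exact fun ⟨⟨huv, hne⟩, he⟩ => ⟨Bool.le_iff_imp.mp (h _ he) huv, hne⟩

theorem finRotate_finRotate_ne {n : ℕ} (hn : 3 ≤ n) (i : Fin n) :
    finRotate n (finRotate n i) ≠ i := by
  obtain ⟨m, rfl⟩ : ∃ m, n = m + 3 := ⟨n - 3, by omega⟩
  rw [finRotate_apply, finRotate_apply, add_assoc, Ne, add_eq_left, Fin.ext_iff]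
  simp [Fin.val_add, Nat.mod_eq_of_lt (show 2 < m + 3 by omega)]

theorem injective_sym2_mk_finRotate {n : ℕ} (hn : 3 ≤ n) (v : Fin n ≃ Fin n) :
    Injective fun i => s(v i, v (finRotate n i)) := by
  intro i j h
  rcases Sym2.eq_iff.mp h with ⟨hij, -⟩ | ⟨hij, hji⟩
  · exact v.injective hij
  · have hi : i = finRotate n j := v.injective hij
    exact absurd (hi ▸ v.injective hji) (finRotate_finRotate_ne hn j)

theorem HasChiHamCycle.mono {n : ℕ} {G G' : Fin n → SimpleGraph (Fin n)}
    {χ : Fin n → Fin n} (h : HasChiHamCycle n G χ) (hG : ∀ c, G c ≤ G' c) : HasChiHamCycle n G' χ :=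
  let ⟨hn, v, hv⟩ := h
  ⟨hn, v, fun i => hG _ (hv i)⟩

/-- A Hamilton cycle passes through each edge at most once. -/
theorem HasChiHamCycle.exists_deleteEdges {n : ℕ} {G : Fin n → SimpleGraph (Fin n)}
    {χ : Fin n → Fin n} (h : HasChiHamCycle n G χ) (e₀ : Sym2 (Fin n)) :
    ∃ c₀, HasChiHamCycle n (fun c => if c = c₀ then G c else (G c).deleteEdges {e₀}) χ := by
  obtain ⟨hn, v, hv⟩ := h
  obtain ⟨c₀, hc₀⟩ : ∃ c₀, ∀ i, s(v i, v (finRotate n i)) = e₀ → χ i = c₀ := by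
    by_cases hused : ∃ i, s(v i, v (finRotate n i)) = e₀
    · obtain ⟨i, hi⟩ := hused
      exact ⟨χ i, fun j hj => congrArg χ (injective_sym2_mk_finRotate hn v (hj.trans hi.symm))⟩
    · exact ⟨χ ⟨0, by omega⟩, fun i hi => absurd ⟨i, hi⟩ hused⟩
  refine ⟨c₀, hn, v, fun i => ?_⟩
  dsimp only
  split_ifs with hi
  · exact hv i
  · exact (SimpleGraph.deleteEdges_adj ..).mpr ⟨hv i, mt (hc₀ i) hi⟩

section Hybrid

variable {n : ℕ}

/-- The coordinate of the configuration `f` that colour `c` reads at the edge `e`: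
its own graph `H_c` (coordinate `some c`) if `(c, e) ∈ T`, the shared graph `H_0` otherwise. -/
def hybridSource (T : Finset (Fin n × Sym2 (Fin n))) (c : Fin n) (e : Sym2 (Fin n)) :
    Option (Fin n) × Sym2 (Fin n) :=
  (if (c, e) ∈ T then some c else none, e)

def hybridGraph (T : Finset (Fin n × Sym2 (Fin n)))
    (f : Option (Fin n) × Sym2 (Fin n) → Bool) (c : Fin n) : SimpleGraph (Fin n) :=
  graphOf (f ∘ hybridSource T c)

variable {T : Finset (Fin n × Sym2 (Fin n))} {f : Option (Fin n) × Sym2 (Fin n) → Bool}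

theorem hybridGraph_empty (c : Fin n) : hybridGraph ∅ f c = graphOf (curry f none) := by
  simp [hybridGraph, hybridSource, comp_def]
  rfl

theorem hybridGraph_univ (c : Fin n) :
    hybridGraph Finset.univ f c = graphOf (curry f (some c)) := by
  simp [hybridGraph, hybridSource, comp_def]
  rfl

theorem hybridGraph_mono {f' : Option (Fin n) × Sym2 (Fin n) → Bool} (h : f ≤ f') (c : Fin n) :
    hybridGraph T f c ≤ hybridGraph T f' c :=
  graphOf_mono fun _ => h _

theorem hybridGraph_insert {c₀ : Fin n} {e₀ : Sym2 (Fin n)} (h : (c₀, e₀) ∉ T) :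
    hybridGraph (insert (c₀, e₀) T) (update f (some c₀, e₀) (f (none, e₀))) =
      hybridGraph T f := by
  funext c
  refine congrArg graphOf (funext fun e => ?_)
  by_cases hce : (c, e) = (c₀, e₀)
  · obtain ⟨rfl, rfl⟩ := Prod.mk.inj hce
    simp [hybridSource, h]
  · have hsrc : hybridSource (insert (c₀, e₀) T) c e = hybridSource T c e := by
      simp [hybridSource, hce]
    have hne : hybridSource T c e ≠ (some c₀, e₀) := by
      simp only [hybridSource]
      split_ifs <;> simp_all
    rw [comp_apply, hsrc, update_of_ne hne, comp_apply]

theorem hybridGraph_update_of_ne {o : Option (Fin n)} {c : Fin n} {e₀ : Sym2 (Fin n)}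
    (h : (o, e₀) ≠ hybridSource T c e₀) (b : Bool) :
    hybridGraph T (update f (o, e₀) b) c = hybridGraph T f c := by
  refine congrArg graphOf (funext fun e => update_of_ne ?_ _ _)
  rintro hoe
  obtain rfl : e = e₀ := congrArg Prod.snd hoe
  exact h hoe.symm

theorem deleteEdges_hybridGraph_le (o : Option (Fin n)) (c : Fin n) (e₀ : Sym2 (Fin n)) :
    (hybridGraph T f c).deleteEdges {e₀} ≤ hybridGraph T (update f (o, e₀) false) c := by
  refine deleteEdges_graphOf_le fun e he => ?_
  have hne : hybridSource T c e ≠ (o, e₀) := fun hoe => he (congrArg Prod.snd hoe)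
  exact (update_of_ne hne false f).ge

end Hybrid

section HamCycle

variable {n : ℕ} (G : Fin n → SimpleGraph (Fin n)) (χ : Fin n → Fin n)
  (T : Finset (Fin n × Sym2 (Fin n)))

theorem monotone_hasChiHamCycle_hybridGraph :
    Monotone fun f => HasChiHamCycle n (fun c => G c ⊔ hybridGraph T f c) χ :=
  fun _ _ h hf => hf.mono fun c => sup_le_sup_left (hybridGraph_mono h c) _

theorem HasChiHamCycle.hybridGraph_update_false_or
    {f : Option (Fin n) × Sym2 (Fin n) → Bool}
    (h : HasChiHamCycle n (fun c => G c ⊔ hybridGraph T f c) χ) (c₀ : Fin n)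
    (e₀ : Sym2 (Fin n)) :
    HasChiHamCycle n (fun c => G c ⊔ hybridGraph T (update f (none, e₀) false) c) χ ∨
      HasChiHamCycle n (fun c => G c ⊔ hybridGraph T (update f (some c₀, e₀) false) c) χ := by
  obtain ⟨c', hc'⟩ := h.exists_deleteEdges e₀
  have keep : ∀ o, (o, e₀) ≠ hybridSource T c' e₀ →
      HasChiHamCycle n (fun c => G c ⊔ hybridGraph T (update f (o, e₀) false) c) χ := by
    intro o ho
    refine hc'.mono fun c => ?_
    split_ifs with hc
    · rw [hc, hybridGraph_update_of_ne ho]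
    · rw [SimpleGraph.deleteEdges_sup]
      exact sup_le_sup (SimpleGraph.deleteEdges_le _) (deleteEdges_hybridGraph_le o c e₀)
  by_cases hsrc : hybridSource T c' e₀ = (none, e₀)
  · exact Or.inr (keep _ (hsrc ▸ by simp))
  · exact Or.inl (keep _ (Ne.symm hsrc))

theorem pi_hasChiHamCycle_hybridGraph_empty_le (ν : Measure Bool) [SigmaFinite ν] :
    Measure.pi (fun _ => ν) {f | HasChiHamCycle n (fun c => G c ⊔ hybridGraph ∅ f c) χ} ≤
      Measure.pi (fun _ => ν) {f | HasChiHamCycle n (fun c => G c ⊔ hybridGraph T f c) χ} := by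
  induction T using Finset.induction_on with
  | empty => exact le_rfl
  | @insert x T hx ih =>
    obtain ⟨c₀, e₀⟩ := x
    refine ih.trans ?_
    simp_rw [← hybridGraph_insert hx]
    exact pi_setOf_update_le ν (monotone_hasChiHamCycle_hybridGraph G χ _)
      fun f hf => hf.hybridGraph_update_false_or G χ _ c₀ e₀

end HamCycle

instance (p : ℝ) : IsProbabilityMeasure (bernoulliMeasure p) := by
  unfold bernoulliMeasure; infer_instance

theorem statement_9_general (n : ℕ) (G : Fin n → SimpleGraph (Fin n)) (χ : Fin n → Fin n)
    (p' : ℝ) :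
    erTupleMeasure (Option (Fin n)) n p'
        {ω | HasChiHamCycle n (fun i => G i ⊔ graphOf (ω none)) χ} ≤
      erTupleMeasure (Option (Fin n)) n p'
        {ω | HasChiHamCycle n (fun i => G i ⊔ graphOf (ω (some i))) χ} := by
  rw [erTupleMeasure, erMeasure, ← Measure.map_curry_pi, MeasurableEquiv.map_apply,
    MeasurableEquiv.map_apply]
  simpa [MeasurableEquiv.coe_curry, hybridGraph_empty, hybridGraph_univ] using
    pi_hasChiHamCycle_hybridGraph_empty_le G χ Finset.univ (bernoulliMeasure p')

/-- The random graphs `H_0, H_1, …, H_n` are modelled as the coordinates of one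
outcome `ω : Option (Fin n) → Sym2 (Fin n) → Bool` of the product measure, with
`ω none` playing the role of `H_0` and `ω (some j)` that of `H_j`. -/
theorem statement_9 (n : ℕ) (G : Fin n → SimpleGraph (Fin n)) (χ : Fin n → Fin n)
    (p' : ℝ) (hp0 : 0 ≤ p') (hp1 : p' ≤ 1) :
    erTupleMeasure (Option (Fin n)) n p'
        {ω | HasChiHamCycle n (fun i => G i ⊔ graphOf (ω none)) χ} ≤
      erTupleMeasure (Option (Fin n)) n p'
        {ω | HasChiHamCycle n (fun i => G i ⊔ graphOf (ω (some i))) χ} :=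
  statement_9_general n G χ p'
end

section
/- Let 0 < c < e and set p = c/n. Let (G_1,…,G_n) be a tuple of n independent random graphs on a common vertex set of size n, each sampled from G(n,p), and let χ:[n]→[n] be any fixed bijection. Then the probability that (G_1,…,G_n) contains a χ-colored Hamilton cycle tends to 0 as n → ∞; in particular, with probability tending to 1, the tuple (G_1,…,G_n) is not rainbow Hamilton-universal. -/
open MeasureTheory Filter

/-- `(G_1, …, G_n)` is rainbow Hamilton-universal if it has a `χ`-colored Hamilton
cycle for every bijection `χ : [n] → [n]`. -/
def RainbowHamUniversal (n : ℕ) (G : Fin n → SimpleGraph (Fin n)) : Prop :=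
  ∀ χ : Fin n ≃ Fin n, HasChiHamCycle n G ⇑χ

/-! A fixed `χ`-colored Hamilton cycle is a permutation `v` of the vertices, and it asks for
`n` prescribed edges, one in each of the `n` independent graphs, so it is present with
probability at most `p ^ n`. A union bound over the `n !` permutations gives
`n ! * (c / n) ^ n`, which tends to `0` when `c < e`: the ratio of consecutive terms is
`c / (1 + 1 / n) ^ n → c / e < 1`. Rainbow Hamilton-universality requires in particular a
`χ`-colored Hamilton cycle. -/

open scoped ENNReal Topology Nat

instance inst_s13 (p : ℝ) : IsProbabilityMeasure (bernoulliMeasure p) := by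
  unfold bernoulliMeasure; infer_instance

instance (n : ℕ) (p : ℝ) : IsProbabilityMeasure (erMeasure n p) := by
  unfold erMeasure; infer_instance

lemma bernoulliMeasure_true_le (p : ℝ) : bernoulliMeasure p {true} ≤ ENNReal.ofReal p := by
  rw [bernoulliMeasure, PMF.toMeasure_apply_singleton _ _ (measurableSet_singleton _)]
  exact ENNReal.coe_le_coe.2 (min_le_left _ _)

lemma erMeasure_edge_le (n : ℕ) (p : ℝ) (e : Sym2 (Fin n)) :
    erMeasure n p {g | g e = true} ≤ ENNReal.ofReal p := by
  change erMeasure n p (Function.eval e ⁻¹' {true}) ≤ _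
  rw [erMeasure, (measurePreserving_eval _ e).measure_preimage
    (measurableSet_singleton true).nullMeasurableSet]
  exact bernoulliMeasure_true_le p

lemma erTupleMeasure_edges_le {ι : Type*} [Fintype ι] (n : ℕ) (p : ℝ) (e : ι → Sym2 (Fin n)) :
    erTupleMeasure ι n p {ω | ∀ i, ω i (e i) = true} ≤ ENNReal.ofReal p ^ Fintype.card ι := by
  have hpi : {ω : ι → Sym2 (Fin n) → Bool | ∀ i, ω i (e i) = true} =
      Set.univ.pi fun i => {g | g (e i) = true} := by
    ext; simp
  rw [hpi, erTupleMeasure, Measure.pi_pi, ← Finset.card_univ, ← Finset.prod_const]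
  exact Finset.prod_le_prod' fun i _ => erMeasure_edge_le n p (e i)

lemma erTupleMeasure_hasChiHamCycle_le (n : ℕ) (p : ℝ) (χ : Fin n ≃ Fin n) :
    erTupleMeasure (Fin n) n p {ω | HasChiHamCycle n (fun i => graphOf (ω i)) χ} ≤
      n ! * ENNReal.ofReal p ^ n := by
  let cycleEdge (v : Equiv.Perm (Fin n)) (j : Fin n) : Sym2 (Fin n) :=
    s(v (χ.symm j), v (finRotate n (χ.symm j)))
  have hcover : {ω | HasChiHamCycle n (fun i => graphOf (ω i)) χ} ⊆
      ⋃ v, {ω : Fin n → Sym2 (Fin n) → Bool | ∀ j, ω j (cycleEdge v j) = true} := by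
    rintro ω ⟨-, v, hv⟩
    refine Set.mem_iUnion.2 ⟨v, fun j => ?_⟩
    have hadj := hv (χ.symm j)
    rw [Equiv.apply_symm_apply] at hadj
    exact ((SimpleGraph.fromEdgeSet_adj _).1 hadj).1
  calc _ ≤ ∑ v, erTupleMeasure (Fin n) n p {ω | ∀ j, ω j (cycleEdge v j) = true} :=
        (measure_mono hcover).trans (measure_iUnion_fintype_le _ _)
    _ ≤ ∑ _v : Equiv.Perm (Fin n), ENNReal.ofReal p ^ n :=
        Finset.sum_le_sum fun v _ => by
          simpa using erTupleMeasure_edges_le n p (cycleEdge v)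
    _ = n ! * ENNReal.ofReal p ^ n := by simp [Fintype.card_perm]

lemma factorial_mul_div_pow_succ (c : ℝ) {n : ℕ} (hn : n ≠ 0) :
    ((n + 1)! : ℝ) * (c / (n + 1 : ℕ)) ^ (n + 1) = n ! * (c / n) ^ n * (c / (1 + 1 / n) ^ n) := by
  have hn' : (n : ℝ) ≠ 0 := by exact_mod_cast hn
  rw [show (1 : ℝ) + 1 / n = (n + 1) / n by field_simp]
  push_cast [Nat.factorial_succ]
  rw [div_pow, div_pow, div_pow, div_div_eq_mul_div, pow_succ]
  field_simp
  ring

lemma tendsto_factorial_mul_div_pow {c : ℝ} (hc0 : 0 < c) (hce : c < Real.exp 1) :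
    Tendsto (fun n : ℕ => (n ! : ℝ) * (c / n) ^ n) atTop (𝓝 0) := by
  set f : ℕ → ℝ := fun n => n ! * (c / n) ^ n
  have hf : ∀ n, 0 < n → 0 < f n := fun n hn => by positivity
  have hratio : Tendsto (fun n => ‖f (n + 1)‖ / ‖f n‖) atTop (𝓝 (c / Real.exp 1)) := by
    refine (tendsto_const_nhds.div (Real.tendsto_one_add_div_pow_exp 1)
      (Real.exp_ne_zero 1)).congr' ?_
    filter_upwards [eventually_gt_atTop 0] with n hn
    rw [Real.norm_of_nonneg (hf _ n.succ_pos).le, Real.norm_of_nonneg (hf n hn).le,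
      eq_div_iff (hf n hn).ne', mul_comm]
    exact (factorial_mul_div_pow_succ c hn.ne').symm
  exact (summable_of_ratio_test_tendsto_lt_one ((div_lt_one (Real.exp_pos 1)).2 hce)
    ((eventually_gt_atTop 0).mono fun n hn => (hf n hn).ne') hratio).tendsto_atTop_zero

theorem statement_13 (c : ℝ) (hc0 : 0 < c) (hce : c < Real.exp 1)
    (χ : (n : ℕ) → Fin n ≃ Fin n) :
    Tendsto
      (fun n => erTupleMeasure (Fin n) n (c / n)
        {ω | HasChiHamCycle n (fun i => graphOf (ω i)) ⇑(χ n)})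
      atTop (nhds 0) ∧
    Tendsto
      (fun n => erTupleMeasure (Fin n) n (c / n)
        {ω | RainbowHamUniversal n fun i => graphOf (ω i)})
      atTop (nhds 0) := by
  have hbound (n : ℕ) :
      erTupleMeasure (Fin n) n (c / n) {ω | HasChiHamCycle n (fun i => graphOf (ω i)) (χ n)} ≤
        ENNReal.ofReal (n ! * (c / n) ^ n) := by
    have hp : 0 ≤ c / n := by positivity
    rw [ENNReal.ofReal_mul (by positivity), ENNReal.ofReal_pow hp, ENNReal.ofReal_natCast]
    exact erTupleMeasure_hasChiHamCycle_le n _ (χ n)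
  have hlim : Tendsto (fun n : ℕ => ENNReal.ofReal (n ! * (c / n) ^ n)) atTop (𝓝 0) := by
    simpa using ENNReal.tendsto_ofReal (tendsto_factorial_mul_div_pow hc0 hce)
  have hcycle := tendsto_of_tendsto_of_tendsto_of_le_of_le tendsto_const_nhds hlim
    (fun _ => zero_le) hbound
  exact ⟨hcycle, tendsto_of_tendsto_of_tendsto_of_le_of_le tendsto_const_nhds hcycle
    (fun _ => zero_le) fun n => measure_mono fun ω hω => hω (χ n)⟩
end

section
/- Let ε > 0, let C₀ ≥ 1, set K = max{1/ε, C₀}, and let n be sufficiently large in terms of K. Let G be a graph on the vertex set V = L ∪ R such that there is an edge of G between any two disjoint vertex sets of size ⌈n/(10K)⌉. Then there exists a set X ⊆ V with |X| ≤ n/(10K) ≤ εn such that for every Y ⊆ L, the induced subgraph G' = G[V ∖ (X ∪ Y)] with m = |V(G')| vertices satisfies: (i) |N_{G'}(U)| ≥ K|U| for every U ⊆ V(G') with |U| ≤ m/(2K), and (ii) there is an edge of G' between any two disjoint sets U, W ⊆ V(G') with |U|, |W| ≥ m/(2K). -/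
/-!
Put `t = ⌈n/(10K)⌉`, so that `G` is `t`-joined: any two disjoint sets of at least `t` vertices
span an edge. Take `X` to be a largest set of at most `2t - 2` vertices having at most `K|X|`
neighbours in `R ∖ X`. A set `S` with `s ≥ t` vertices has fewer than `t` non-neighbours in
`R ∖ S`, hence at least `|R| - s - t + 1 > Ks` neighbours there if `s ≤ 2t - 2`; so `|X| < t`.
Deleting `Y ⊆ L` keeps `R ∖ X` in `G'`, so a set `U` of `G'` with `|X| + |U| ≤ 2t - 2` and
fewer than `K|U|` neighbours could be added to `X`. Any other `U` has at least `t` vertices,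
and then fewer than `2t` vertices of `G'` miss `N(U)`, which suffices since `G'` has at least
`⌈n/2⌉ - t + 1` vertices.
-/

open Finset

namespace SimpleGraph

variable {V : Type*} (G : SimpleGraph V)

def IsJoined (t : ℕ) : Prop :=
  ∀ U W : Finset V, Disjoint U W → t ≤ #U → t ≤ #W → ∃ u ∈ U, ∃ w ∈ W, G.Adj u w

def neighborsIn [DecidableRel G.Adj] (D U : Finset V) : Finset V :=
  {w ∈ D | ∃ u ∈ U, G.Adj u w}

section neighborsIn

variable [DecidableRel G.Adj] {D D' U A B : Finset V}

theorem coe_neighborsIn :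
    (G.neighborsIn D U : Set V) = {w | w ∈ D ∧ ∃ u ∈ U, G.Adj u w} := by
  ext; simp [neighborsIn]

theorem neighborsIn_mono (h : D ⊆ D') : G.neighborsIn D U ⊆ G.neighborsIn D' U :=
  filter_subset_filter _ h

theorem neighborsIn_union [DecidableEq V] :
    G.neighborsIn D (A ∪ B) = G.neighborsIn D A ∪ G.neighborsIn D B := by
  ext; simp [neighborsIn, or_and_right, exists_or, and_or_left]

end neighborsIn

namespace IsJoined

variable {G} {t : ℕ}

theorem of_card_eq
    (h : ∀ U W : Finset V, Disjoint U W → #U = t → #W = t → ∃ u ∈ U, ∃ w ∈ W, G.Adj u w) :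
    G.IsJoined t := by
  intro U W hUW hU hW
  obtain ⟨U', hU'U, hU'⟩ := exists_subset_card_eq hU
  obtain ⟨W', hW'W, hW'⟩ := exists_subset_card_eq hW
  obtain ⟨u, hu, w, hw, huw⟩ := h U' W' (hUW.mono hU'U hW'W) hU' hW'
  exact ⟨u, hU'U hu, w, hW'W hw, huw⟩

theorem pos (hG : G.IsJoined t) : 0 < t := by
  by_contra! ht
  obtain ⟨u, hu, -⟩ := hG ∅ ∅ (disjoint_empty_left _) (by simpa using ht) (by simpa using ht)
  simp at hu

theorem card_lt_of_forall_not_adj (hG : G.IsJoined t) {A B : Finset V} (hAB : Disjoint A B)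
    (hA : t ≤ #A) (hnadj : ∀ a ∈ A, ∀ b ∈ B, ¬G.Adj a b) : #B < t := by
  by_contra! hB
  obtain ⟨a, ha, b, hb, hab⟩ := hG A B hAB hA hB
  exact hnadj a ha b hb hab

variable [DecidableRel G.Adj] {U D : Finset V}

theorem card_lt_card_neighborsIn_add (hG : G.IsJoined t) (hUD : Disjoint U D) (hU : t ≤ #U) :
    #D < #(G.neighborsIn D U) + t := by
  have hsplit := card_filter_add_card_filter_not (s := D) fun w => ∃ u ∈ U, G.Adj u w
  have hnon : #{w ∈ D | ¬∃ u ∈ U, G.Adj u w} < t :=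
    hG.card_lt_of_forall_not_adj (hUD.mono_right (filter_subset _ _)) hU
      fun u hu w hw huw => (mem_filter.1 hw).2 ⟨u, hu, huw⟩
  unfold neighborsIn
  omega

/-- Let `A` be the vertices of `D` without a neighbour in `U`. Fewer than `t` of them lie
outside `U`; and if `t` of them, forming `B`, lie in `U`, then no vertex of `(U ∪ A) ∖ B` is
adjacent to `B`, so `|U ∪ A| < 2t`. -/
theorem card_lt_card_neighborsIn_add_two_mul [DecidableEq V] (hG : G.IsJoined t)
    (hU : t ≤ #U) : #D < #(G.neighborsIn D U) + 2 * t := by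
  set A := D.filter fun w => ¬∃ u ∈ U, G.Adj u w
  have hsplit : #(G.neighborsIn D U) + #A = #D := card_filter_add_card_filter_not _
  have hA : ∀ a ∈ A, ∀ u ∈ U, ¬G.Adj u a := fun a ha u hu hua => (mem_filter.1 ha).2 ⟨u, hu, hua⟩
  suffices #A < 2 * t by omega
  by_cases hAU : t ≤ #(A ∩ U)
  · obtain ⟨B, hBAU, hB⟩ := exists_subset_card_eq hAU
    have hrest : #((U ∪ A) \ B) < t := by
      refine hG.card_lt_of_forall_not_adj disjoint_sdiff hB.ge fun b hb x hx hbx => ?_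
      have hb' := mem_inter.1 (hBAU hb)
      rcases mem_union.1 (mem_sdiff.1 hx).1 with hxU | hxA
      · exact hA b hb'.1 x hxU hbx.symm
      · exact hA x hxA b hb'.2 hbx
    have hBUA : B ⊆ U ∪ A := hBAU.trans (inter_subset_left.trans subset_union_right)
    have := card_sdiff_add_card_eq_card hBUA
    have := card_le_card (subset_union_right : A ⊆ U ∪ A)
    omega
  · have hout : #(A \ U) < t :=
      hG.card_lt_of_forall_not_adj disjoint_sdiff hU fun u hu a ha => hA a (mem_sdiff.1 ha).1 u hu
    have := card_sdiff_add_card_inter A U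
    omega

theorem mul_card_lt_card_neighborsIn_sdiff [DecidableEq V] (hG : G.IsJoined t)
    {R S : Finset V} {K : ℝ} (hS : t ≤ #S) (hR : (K + 1) * #S + t < #R + 1) :
    K * #S < #(G.neighborsIn (R \ S) S) := by
  have h1 := hG.card_lt_card_neighborsIn_add (D := R \ S) disjoint_sdiff hS
  have h2 := card_le_card_sdiff_add_card (s := R) (t := S)
  have h3 : (#R : ℝ) + 1 ≤ #(G.neighborsIn (R \ S) S) + t + #S := by exact_mod_cast (by omega)
  linarith

/-- `X` is a largest set of at most `2t - 2` vertices with at most `K|X|` neighbours in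
`R ∖ X`; a non-expanding `U` could be added to it. -/
theorem exists_card_lt_forall_small_expanding [Fintype V] [DecidableEq V] (hG : G.IsJoined t)
    (R : Finset V) {K : ℝ} (hK : 0 ≤ K) (hR : (2 * K + 3) * ((t : ℝ) - 1) < #R) :
    ∃ X : Finset V, #X < t ∧ ∀ U D : Finset V, Disjoint X U → R \ X ⊆ D →
      #X + #U ≤ 2 * t - 2 → K * #U ≤ #(G.neighborsIn D U) := by
  have ht := hG.pos
  set F := (univ : Finset (Finset V)).filter
    fun S => #S ≤ 2 * t - 2 ∧ #(G.neighborsIn (R \ S) S) ≤ K * #S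
  obtain ⟨X, hXF, hXmax⟩ :=
    exists_max_image F card ⟨∅, mem_filter.2 ⟨mem_univ _, by simp [neighborsIn]⟩⟩
  obtain ⟨hX2, hXR⟩ := (mem_filter.1 hXF).2
  have hXt : #X < t := by
    by_contra! hX
    have hX2' : ((#X + 2 : ℕ) : ℝ) ≤ (2 * t : ℕ) := by exact_mod_cast (by omega : #X + 2 ≤ 2 * t)
    push_cast at hX2'
    have hbound := mul_le_mul_of_nonneg_left (by linarith : (#X : ℝ) ≤ 2 * t - 2)
      (by linarith : (0 : ℝ) ≤ K + 1)
    have := hG.mul_card_lt_card_neighborsIn_sdiff (R := R) hX (by linarith)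
    linarith
  refine ⟨X, hXt, fun U D hXU hRD hXU2 => ?_⟩
  by_contra! hU
  have hUne : #U ≠ 0 := by
    rintro h
    simp only [h, Nat.cast_zero, mul_zero] at hU
    exact absurd hU (not_lt.2 (Nat.cast_nonneg _))
  have hsub : G.neighborsIn (R \ (X ∪ U)) (X ∪ U) ⊆
      G.neighborsIn (R \ X) X ∪ G.neighborsIn D U := by
    have hRXU : R \ (X ∪ U) ⊆ R \ X := sdiff_subset_sdiff subset_rfl subset_union_left
    rw [neighborsIn_union]
    exact union_subset_union (neighborsIn_mono G hRXU) (neighborsIn_mono G (hRXU.trans hRD))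
  have hXUF : X ∪ U ∈ F := by
    have hcard := (card_le_card hsub).trans (card_union_le _ _)
    have hcard' : (#(G.neighborsIn (R \ (X ∪ U)) (X ∪ U)) : ℝ) ≤
        #(G.neighborsIn (R \ X) X) + #(G.neighborsIn D U) := by exact_mod_cast hcard
    rw [mem_filter, card_union_of_disjoint hXU]
    refine ⟨mem_univ _, hXU2, ?_⟩
    push_cast
    linarith
  have := hXmax _ hXUF
  rw [card_union_of_disjoint hXU] at this
  omega

theorem exists_card_lt_forall_expanding [Fintype V] [DecidableEq V] (hG : G.IsJoined t)
    (R : Finset V) {K : ℝ} (hK : 0 ≤ K) (hR : (2 * K + 3) * ((t : ℝ) - 1) < #R) :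
    ∃ X : Finset V, #X < t ∧ ∀ U D : Finset V, Disjoint X U → R \ X ⊆ D →
      K * #U + 2 * t ≤ #D + 1 → K * #U ≤ #(G.neighborsIn D U) := by
  obtain ⟨X, hXt, hX⟩ := hG.exists_card_lt_forall_small_expanding R hK hR
  refine ⟨X, hXt, fun U D hXU hRD hUD => ?_⟩
  rcases le_or_gt (#X + #U) (2 * t - 2) with hsmall | hlarge
  · exact hX U D hXU hRD hsmall
  · have hD := hG.card_lt_card_neighborsIn_add_two_mul (D := D) (by omega : t ≤ #U)
    have hD' : (#D : ℝ) + 1 ≤ #(G.neighborsIn D U) + 2 * t := by exact_mod_cast hD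
    linarith

end IsJoined

end SimpleGraph

section Arithmetic

variable {K : ℝ} {n t r m u : ℕ}

theorem ten_mul_le_and_eq_one_or_le (hK : 1 ≤ K) (hn : ⌈10 * K⌉₊ + ⌈4 * K / (K - 1)⌉₊ ≤ n) :
    10 * K ≤ n ∧ (K = 1 ∨ 4 * K ≤ (K - 1) * n) := by
  have h10 : 10 * K ≤ n :=
    (Nat.le_ceil _).trans (by exact_mod_cast (Nat.le_add_right _ _).trans hn)
  refine ⟨h10, (eq_or_lt_of_le hK).imp Eq.symm fun hK1 => ?_⟩
  have h4 : 4 * K / (K - 1) ≤ n :=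
    (Nat.le_ceil _).trans (by exact_mod_cast (Nat.le_add_left _ _).trans hn)
  rw [div_le_iff₀ (by linarith)] at h4
  linarith

theorem two_mul_add_three_mul_sub_one_lt (hK : 1 ≤ K) (ht1 : 1 ≤ t)
    (ht : ((t : ℝ) - 1) * (10 * K) < n) (hr : n ≤ 2 * r) :
    (2 * K + 3) * ((t : ℝ) - 1) < r := by
  have ha : (0 : ℝ) ≤ t - 1 := by simp [ht1]
  have hr' : (n : ℝ) ≤ 2 * r := by exact_mod_cast hr
  nlinarith [mul_le_mul_of_nonneg_right hK ha]

theorem le_div_two_mul_of_add_one_le (hK : 1 ≤ K) (ht1 : 1 ≤ t)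
    (ht : ((t : ℝ) - 1) * (10 * K) < n) (hr : n ≤ 2 * r) (hn : 10 * K ≤ n)
    (hm : r + 1 ≤ m + t) : (t : ℝ) ≤ m / (2 * K) := by
  have ha : (0 : ℝ) ≤ t - 1 := by simp [ht1]
  have hr' : (n : ℝ) ≤ 2 * r := by exact_mod_cast hr
  have hm' : (r : ℝ) + 1 ≤ m + t := by exact_mod_cast hm
  rw [le_div_iff₀ (by linarith)]
  nlinarith [mul_le_mul_of_nonneg_right hK ha]

/-- For `K = 1` this holds only by integrality (`2u ≤ m` and `4t ≤ m + 3`). -/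
theorem mul_add_two_mul_le_add_one (hK : 1 ≤ K) (ht : ((t : ℝ) - 1) * (10 * K) < n)
    (hr : n ≤ 2 * r) (hKn : K = 1 ∨ 4 * K ≤ (K - 1) * n) (hm : r + 1 ≤ m + t)
    (hu : (u : ℝ) ≤ m / (2 * K)) : K * u + 2 * t ≤ m + 1 := by
  rw [le_div_iff₀ (by linarith)] at hu
  rcases hKn with rfl | hKn
  · have hu' : 2 * u ≤ m := by
      exact_mod_cast (by push_cast; linarith : ((2 * u : ℕ) : ℝ) ≤ m)
    have ht' : 10 * t < n + 10 := by
      exact_mod_cast (by push_cast; linarith : ((10 * t : ℕ) : ℝ) < n + 10)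
    rw [one_mul]
    exact_mod_cast (by omega : u + 2 * t ≤ m + 1)
  · have hr' : (n : ℝ) ≤ 2 * r := by exact_mod_cast hr
    have hm' : (r : ℝ) + 1 ≤ m + t := by exact_mod_cast hm
    have hK0 : (0 : ℝ) < K := by linarith
    have h10 : 10 * ((t : ℝ) - 1) < n - 4 :=
      lt_of_mul_lt_mul_left (by nlinarith : K * (10 * ((t : ℝ) - 1)) < K * (n - 4)) hK0.le
    nlinarith

end Arithmetic

theorem two_mul_card_compl_leftSet (n : ℕ) : n ≤ 2 * (leftSet n)ᶜ.card := by
  have hL : (leftSet n).card = n / 2 := by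
    rcases Nat.eq_zero_or_pos n with rfl | hn
    · simp [leftSet]
    · have e : leftSet n = Iio ⟨n / 2, Nat.div_lt_self hn (by norm_num)⟩ := by
        ext v
        simp [leftSet, Fin.lt_def]
      rw [e, Fin.card_Iio]
  rw [card_compl, hL, Fintype.card_fin]
  omega

open SimpleGraph in
theorem statement_16 (ε : ℝ) (hε : 0 < ε) (C₀ : ℝ) (hC₀ : 1 ≤ C₀)
    (K : ℝ) (hK : K = max (1 / ε) C₀) :
    ∃ N : ℕ, ∀ n : ℕ, N ≤ n → ∀ G : SimpleGraph (Fin n),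
      (∀ U W : Finset (Fin n), Disjoint U W →
        U.card = ⌈(n : ℝ) / (10 * K)⌉₊ → W.card = ⌈(n : ℝ) / (10 * K)⌉₊ →
        ∃ u ∈ U, ∃ w ∈ W, G.Adj u w) →
      ∃ X : Finset (Fin n), (X.card : ℝ) ≤ (n : ℝ) / (10 * K) ∧
        (n : ℝ) / (10 * K) ≤ ε * n ∧
        ∀ Y : Finset (Fin n), Y ⊆ leftSet n →
          ((∀ U : Finset (Fin n), U ⊆ (X ∪ Y)ᶜ →
              (U.card : ℝ) ≤ ((X ∪ Y)ᶜ.card : ℝ) / (2 * K) →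
              K * U.card ≤
                (({w : Fin n | w ∈ (X ∪ Y)ᶜ ∧ ∃ u ∈ U, G.Adj u w}).ncard : ℝ)) ∧
            (∀ U W : Finset (Fin n), U ⊆ (X ∪ Y)ᶜ → W ⊆ (X ∪ Y)ᶜ → Disjoint U W →
              ((X ∪ Y)ᶜ.card : ℝ) / (2 * K) ≤ U.card →
              ((X ∪ Y)ᶜ.card : ℝ) / (2 * K) ≤ W.card →
              ∃ u ∈ U, ∃ w ∈ W, G.Adj u w)) := by
  classical
  have hK1 : 1 ≤ K := hK ▸ hC₀.trans (le_max_right _ _)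
  have hεK : 1 ≤ ε * K := by
    have h := hK ▸ le_max_left (1 / ε) C₀
    rwa [div_le_iff₀ hε, mul_comm] at h
  refine ⟨⌈10 * K⌉₊ + ⌈4 * K / (K - 1)⌉₊, fun n hn G hG => ?_⟩
  obtain ⟨hn10, hKn⟩ := ten_mul_le_and_eq_one_or_le hK1 hn
  set t := ⌈(n : ℝ) / (10 * K)⌉₊
  have hJ : G.IsJoined t := IsJoined.of_card_eq hG
  have ht : ((t : ℝ) - 1) * (10 * K) < n := by
    rw [← lt_div_iff₀ (by positivity)]
    linarith [Nat.ceil_lt_add_one (by positivity : (0 : ℝ) ≤ n / (10 * K))]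
  have hR := two_mul_card_compl_leftSet n
  obtain ⟨X, hXt, hX⟩ := hJ.exists_card_lt_forall_expanding (leftSet n)ᶜ (by linarith)
    (two_mul_add_three_mul_sub_one_lt hK1 hJ.pos ht hR)
  refine ⟨X, ?_, ?_, fun Y hY => ?_⟩
  · have hXt' : (X.card : ℝ) + 1 ≤ t := by exact_mod_cast hXt
    rw [le_div_iff₀ (by positivity)]
    nlinarith
  · rw [div_le_iff₀ (by positivity)]
    nlinarith
  set D := (X ∪ Y)ᶜ
  have hRD : (leftSet n)ᶜ \ X ⊆ D := fun w hw => by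
    simp only [D, mem_compl, mem_union, mem_sdiff, not_or] at hw ⊢
    exact ⟨hw.2, fun hwY => hw.1 (hY hwY)⟩
  have hm : (leftSet n)ᶜ.card + 1 ≤ D.card + t := by
    have := le_card_sdiff X (leftSet n)ᶜ
    have := card_le_card hRD
    omega
  refine ⟨fun U hUD hUm => ?_, fun U W hUD hWD hUW hUm hWm => ?_⟩
  · rw [← coe_neighborsIn, Set.ncard_coe_finset]
    exact hX U D ((subset_compl_iff_disjoint_left.1 hUD).mono_left subset_union_left) hRD
      (mul_add_two_mul_le_add_one hK1 ht hR hKn hm hUm)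
  · have htm := le_div_two_mul_of_add_one_le hK1 hJ.pos ht hR hn10 hm
    exact hJ U W hUW (by exact_mod_cast htm.trans hUm) (by exact_mod_cast htm.trans hWm)
end
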